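/- arXiv:2407.11411 — 3 statements merged into one kernel-verified Lean document; each statement's English description precedes it below -/
import Mathlib

section
/- Let r, s ≥ 3 be integers with at least one of r, s odd. If the pair (Γ(r,s), G(r,s)) is basic of cycle type, then (r,s) = (4,p), (p,4), or (p,q) for some odd primes p and q. -/
open SimpleGraph

namespace OG4

variable {V : Type*} {W : Type*}

/-! ### Normal quotients, cycles, and basic pairs -/

/-- The setoid of orbits of a group `N` of permutations of `V`. -/
def orbitSetoid (N : Subgroup (Equiv.Perm V)) : Setoid V := MulAction.orbitRel N V

/-- The (normal) quotient graph of a graph `Γ` with respect to a group `N` of permutations: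
its vertices are the `N`-orbits, two distinct orbits being adjacent iff some vertex of one is
adjacent in `Γ` to some vertex of the other. -/
def quotientGraph (Γ : SimpleGraph V) (N : Subgroup (Equiv.Perm V)) :
    SimpleGraph (Quotient (orbitSetoid N)) :=
  SimpleGraph.fromRel fun a b =>
    ∃ x y : V, Quotient.mk (orbitSetoid N) x = a ∧ Quotient.mk (orbitSetoid N) y = b ∧ Γ.Adj x y

/-- `N` is a normal subgroup of the subgroup `G` (of some ambient group). -/
def NormalIn {G : Type*} [Group G] (N H : Subgroup G) : Prop :=
  N ≤ H ∧ ∀ h ∈ H, ∀ n ∈ N, h * n * h⁻¹ ∈ N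

/-- A graph is isomorphic to a cycle graph `C_m` for some `m ≥ 3`. -/
def IsoCycle (Δ : SimpleGraph W) : Prop :=
  ∃ m : ℕ, 3 ≤ m ∧ Nonempty (Δ ≃g SimpleGraph.cycleGraph m)

/-- Every normal quotient of `(Γ, G)` relative to a nontrivial normal subgroup is degenerate:
it has at most 2 vertices or is a cycle. -/
def IsBasic (Γ : SimpleGraph V) (G : Subgroup (Equiv.Perm V)) : Prop :=
  ∀ N : Subgroup (Equiv.Perm V), NormalIn N G → N ≠ ⊥ →
    Nat.card (Quotient (orbitSetoid N)) ≤ 2 ∨ IsoCycle (quotientGraph Γ N)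

/-- `(Γ, G)` is basic of cycle type. -/
def BasicOfCycleType (Γ : SimpleGraph V) (G : Subgroup (Equiv.Perm V)) : Prop :=
  IsBasic Γ G ∧
    ∃ N : Subgroup (Equiv.Perm V), NormalIn N G ∧ N ≠ ⊥ ∧ IsoCycle (quotientGraph Γ N)

/-- The kernel of the action of `G` on the set of `N`-orbits. -/
def orbitKernel (G N : Subgroup (Equiv.Perm V)) : Subgroup (Equiv.Perm V) where
  carrier := {g | g ∈ G ∧ ∀ x : V,
    Quotient.mk (orbitSetoid N) (g x) = Quotient.mk (orbitSetoid N) x}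
  one_mem' := ⟨G.one_mem, fun x => by simp⟩
  mul_mem' := by
    rintro a b ⟨haG, ha⟩ ⟨hbG, hb⟩
    refine ⟨G.mul_mem haG hbG, fun x => ?_⟩
    rw [Equiv.Perm.mul_apply, ha (b x), hb x]
  inv_mem' := by
    rintro a ⟨haG, ha⟩
    refine ⟨G.inv_mem haG, fun x => ?_⟩
    have h := ha (a⁻¹ x)
    rw [show a (a⁻¹ x) = x by simp] at h
    exact h.symm

/-- `(Γ, G)` has a pair of independent cyclic normal quotients. -/
def HasIndepCyclicQuotients (Γ : SimpleGraph V) (G : Subgroup (Equiv.Perm V)) : Prop :=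
  ∃ N M : Subgroup (Equiv.Perm V), NormalIn N G ∧ NormalIn M G ∧
    IsoCycle (quotientGraph Γ N) ∧ IsoCycle (quotientGraph Γ M) ∧
    ¬ IsoCycle (quotientGraph Γ (orbitKernel G N ⊓ orbitKernel G M))

/-- `(Γ, G)` is basic of independent-cycle type. -/
def BasicOfIndependentCycleType (Γ : SimpleGraph V) (G : Subgroup (Equiv.Perm V)) : Prop :=
  IsBasic Γ G ∧ HasIndepCyclicQuotients Γ G

/-- Isomorphism of graph-group pairs: a graph isomorphism conjugating one group onto the other. -/
def PairIso (Γ : SimpleGraph V) (G : Subgroup (Equiv.Perm V))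
    (Δ : SimpleGraph W) (H : Subgroup (Equiv.Perm W)) : Prop :=
  ∃ e : Γ ≃g Δ, ∀ h : Equiv.Perm W, h ∈ H ↔ ∃ g ∈ G, e.toEquiv.permCongr g = h

/-! ### Minimal normal subgroups -/

/-- `M` is a minimal normal subgroup of the ambient group. -/
def IsMinimalNormal {G : Type*} [Group G] (M : Subgroup G) : Prop :=
  M.Normal ∧ M ≠ ⊥ ∧ ∀ N : Subgroup G, N.Normal → N ≤ M → N = ⊥ ∨ N = M

/-- `M` is a minimal normal subgroup of the subgroup `H`. -/
def IsMinimalNormalIn {G : Type*} [Group G] (M H : Subgroup G) : Prop :=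
  NormalIn M H ∧ M ≠ ⊥ ∧ ∀ N : Subgroup G, NormalIn N H → N ≤ M → N = ⊥ ∨ N = M

/-! ### The graphs `Γ(r,s)` and their automorphisms -/

/-- In `Γ(r,s)`, the vertex `(i,j)` is joined to the four vertices `(i ± 1, j ± 1)`. -/
def gammaRel (r s : ℕ) (x y : ZMod r × ZMod s) : Prop :=
  (y.1 = x.1 + 1 ∨ y.1 = x.1 - 1) ∧ (y.2 = x.2 + 1 ∨ y.2 = x.2 - 1)

/-- The graph `Γ(r,s)` on `ℤ_r × ℤ_s`. -/
def Gamma (r s : ℕ) : SimpleGraph (ZMod r × ZMod s) := SimpleGraph.fromRel (gammaRel r s)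

/-- `μ : (i,j) ↦ (i+1, j)`. -/
def mu (r s : ℕ) : Equiv.Perm (ZMod r × ZMod s) :=
  (Equiv.addRight (1 : ZMod r)).prodCongr (Equiv.refl (ZMod s))

/-- `ν : (i,j) ↦ (i, j+1)`. -/
def nu (r s : ℕ) : Equiv.Perm (ZMod r × ZMod s) :=
  (Equiv.refl (ZMod r)).prodCongr (Equiv.addRight (1 : ZMod s))

/-- `σ : (i,j) ↦ (-i, j)`. -/
def sigma (r s : ℕ) : Equiv.Perm (ZMod r × ZMod s) :=
  (Equiv.neg (ZMod r)).prodCongr (Equiv.refl (ZMod s))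

/-- `τ : (i,j) ↦ (-i, -j)`. -/
def tau (r s : ℕ) : Equiv.Perm (ZMod r × ZMod s) :=
  (Equiv.neg (ZMod r)).prodCongr (Equiv.neg (ZMod s))

/-- `σν : (i,j) ↦ (-i, j+1)`. -/
def sigmaNu (r s : ℕ) : Equiv.Perm (ZMod r × ZMod s) :=
  (Equiv.neg (ZMod r)).prodCongr (Equiv.addRight (1 : ZMod s))

/-- `μν : (i,j) ↦ (i+1, j+1)`. -/
def muNu (r s : ℕ) : Equiv.Perm (ZMod r × ZMod s) :=
  (Equiv.addRight (1 : ZMod r)).prodCongr (Equiv.addRight (1 : ZMod s))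

/-- `σμν : (i,j) ↦ (-(i+1), j+1)`. -/
def sigmaMuNu (r s : ℕ) : Equiv.Perm (ZMod r × ZMod s) :=
  ((Equiv.addRight (1 : ZMod r)).trans (Equiv.neg (ZMod r))).prodCongr
    (Equiv.addRight (1 : ZMod s))

/-- `μ² : (i,j) ↦ (i+2, j)`. -/
def muSq (r s : ℕ) : Equiv.Perm (ZMod r × ZMod s) :=
  (Equiv.addRight (2 : ZMod r)).prodCongr (Equiv.refl (ZMod s))

/-- `ν² : (i,j) ↦ (i, j+2)`. -/
def nuSq (r s : ℕ) : Equiv.Perm (ZMod r × ZMod s) :=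
  (Equiv.refl (ZMod r)).prodCongr (Equiv.addRight (2 : ZMod s))

/-- `μ^k : (i,j) ↦ (i+k, j)`. -/
def muPow (r s k : ℕ) : Equiv.Perm (ZMod r × ZMod s) :=
  (Equiv.addRight ((k : ZMod r))).prodCongr (Equiv.refl (ZMod s))

/-- `μ^k ν² : (i,j) ↦ (i+k, j+2)`. -/
def muPowNuSq (r s k : ℕ) : Equiv.Perm (ZMod r × ZMod s) :=
  (Equiv.addRight ((k : ZMod r))).prodCongr (Equiv.addRight (2 : ZMod s))

/-- `G(r,s) = ⟨μ, ν, σ⟩`. -/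
def Ggroup (r s : ℕ) : Subgroup (Equiv.Perm (ZMod r × ZMod s)) :=
  Subgroup.closure {mu r s, nu r s, sigma r s}

/-- `H(r,s) = ⟨μ, σν, τ⟩`. -/
def Hgroup (r s : ℕ) : Subgroup (Equiv.Perm (ZMod r × ZMod s)) :=
  Subgroup.closure {mu r s, sigmaNu r s, tau r s}

/-! ### The graphs `Γ⁺(r,s)` (for `r`, `s` even) -/

/-- `X⁺`: the set of `(i,j)` with `i` and `j` of the same parity. -/
def XPlus (r s : ℕ) : Set (ZMod r × ZMod s) := {x | x.1.val % 2 = x.2.val % 2}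

/-- `Γ⁺(r,s)`, the subgraph of `Γ(r,s)` induced on `X⁺`. -/
def GammaPlus (r s : ℕ) : SimpleGraph (XPlus r s) :=
  SimpleGraph.induce (XPlus r s) (Gamma r s)

section parity

lemma val_add_one_mod_two (r : ℕ) (hr : 2 ∣ r) (hr0 : r ≠ 0) (i : ZMod r) :
    (i + 1).val % 2 = (i.val + 1) % 2 := by
  haveI : NeZero r := ⟨hr0⟩
  haveI : Fact (1 < r) := ⟨by have := Nat.le_of_dvd (Nat.pos_of_ne_zero hr0) hr; omega⟩
  rw [ZMod.val_add, Nat.mod_mod_of_dvd _ hr, ZMod.val_one]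

lemma val_add_two_mod_two (r : ℕ) (hr : 2 ∣ r) (hr0 : r ≠ 0) (i : ZMod r) :
    (i + 2).val % 2 = i.val % 2 := by
  have h1 := val_add_one_mod_two r hr hr0 i
  have h2 := val_add_one_mod_two r hr hr0 (i + 1)
  rw [show i + 1 + 1 = i + 2 by ring] at h2
  omega

lemma val_neg_mod_two (r : ℕ) (hr : 2 ∣ r) (hr0 : r ≠ 0) (i : ZMod r) :
    (-i).val % 2 = i.val % 2 := by
  haveI : NeZero r := ⟨hr0⟩
  rcases eq_or_ne i 0 with h | h
  · simp [h]
  · have h1 : (-i).val = r - i.val := by rw [ZMod.neg_val]; simp [h]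
    have h2 : i.val < r := ZMod.val_lt i
    have h3 : i.val ≠ 0 := fun hh => h ((ZMod.val_eq_zero i).mp hh)
    obtain ⟨t, rfl⟩ := hr
    rw [h1]
    omega

end parity

section plusPerms

variable (r s : ℕ)

/-- The restriction of `μ²` to `X⁺`. -/
def muSqP (hr : 2 ∣ r) (hr0 : r ≠ 0) : Equiv.Perm (XPlus r s) :=
  (muSq r s).subtypePerm (by
    intro x
    have h := val_add_two_mod_two r hr hr0 x.1
    simp only [XPlus, Set.mem_setOf_eq, muSq, Equiv.prodCongr_apply, Prod.map,
      Equiv.coe_addRight, Equiv.refl_apply]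
    omega)

/-- The restriction of `ν²` to `X⁺`. -/
def nuSqP (hs : 2 ∣ s) (hs0 : s ≠ 0) : Equiv.Perm (XPlus r s) :=
  (nuSq r s).subtypePerm (by
    intro x
    have h := val_add_two_mod_two s hs hs0 x.2
    simp only [XPlus, Set.mem_setOf_eq, nuSq, Equiv.prodCongr_apply, Prod.map,
      Equiv.coe_addRight, Equiv.refl_apply]
    omega)

/-- The restriction of `μν` to `X⁺`. -/
def muNuP (hr : 2 ∣ r) (hr0 : r ≠ 0) (hs : 2 ∣ s) (hs0 : s ≠ 0) : Equiv.Perm (XPlus r s) :=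
  (muNu r s).subtypePerm (by
    intro x
    have h1 := val_add_one_mod_two r hr hr0 x.1
    have h2 := val_add_one_mod_two s hs hs0 x.2
    simp only [XPlus, Set.mem_setOf_eq, muNu, Equiv.prodCongr_apply, Prod.map,
      Equiv.coe_addRight]
    omega)

/-- The restriction of `σ` to `X⁺`. -/
def sigmaP (hr : 2 ∣ r) (hr0 : r ≠ 0) : Equiv.Perm (XPlus r s) :=
  (sigma r s).subtypePerm (by
    intro x
    have h := val_neg_mod_two r hr hr0 x.1
    simp only [XPlus, Set.mem_setOf_eq, sigma, Equiv.prodCongr_apply, Prod.map,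
      Equiv.neg_apply, Equiv.refl_apply]
    omega)

/-- The restriction of `τ` to `X⁺`. -/
def tauP (hr : 2 ∣ r) (hr0 : r ≠ 0) (hs : 2 ∣ s) (hs0 : s ≠ 0) : Equiv.Perm (XPlus r s) :=
  (tau r s).subtypePerm (by
    intro x
    have h1 := val_neg_mod_two r hr hr0 x.1
    have h2 := val_neg_mod_two s hs hs0 x.2
    simp only [XPlus, Set.mem_setOf_eq, tau, Equiv.prodCongr_apply, Prod.map,
      Equiv.neg_apply]
    omega)

/-- The restriction of `σμν` to `X⁺`. -/
def sigmaMuNuP (hr : 2 ∣ r) (hr0 : r ≠ 0) (hs : 2 ∣ s) (hs0 : s ≠ 0) :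
    Equiv.Perm (XPlus r s) :=
  (sigmaMuNu r s).subtypePerm (by
    intro x
    have h1 := val_neg_mod_two r hr hr0 (x.1 + 1)
    have h2 := val_add_one_mod_two r hr hr0 x.1
    have h3 := val_add_one_mod_two s hs hs0 x.2
    simp only [XPlus, Set.mem_setOf_eq, sigmaMuNu, Equiv.prodCongr_apply, Prod.map,
      Equiv.trans_apply, Equiv.coe_addRight, Equiv.neg_apply]
    omega)

/-- `G⁺(r,s) = ⟨μ², μν, σ⟩` acting on `X⁺`. -/
def GPlusGroup (hr : 2 ∣ r) (hr0 : r ≠ 0) (hs : 2 ∣ s) (hs0 : s ≠ 0) :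
    Subgroup (Equiv.Perm (XPlus r s)) :=
  Subgroup.closure {muSqP r s hr hr0, muNuP r s hr hr0 hs hs0, sigmaP r s hr hr0}

/-- `H⁺(r,s) = ⟨μ², σμν, τ⟩` acting on `X⁺`. -/
def HPlusGroup (hr : 2 ∣ r) (hr0 : r ≠ 0) (hs : 2 ∣ s) (hs0 : s ≠ 0) :
    Subgroup (Equiv.Perm (XPlus r s)) :=
  Subgroup.closure
    {muSqP r s hr hr0, sigmaMuNuP r s hr hr0 hs hs0, tauP r s hr hr0 hs hs0}

end plusPerms

/-! ### The standard double cover `Γ₂(r,s)` -/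

/-- Adjacency of the double cover: `(i,j)_δ ~ (i ± 1, j ± 1)_{δ+1}`. -/
def gamma2Rel (r s : ℕ) (x y : (ZMod r × ZMod s) × ZMod 2) : Prop :=
  (y.1.1 = x.1.1 + 1 ∨ y.1.1 = x.1.1 - 1) ∧ (y.1.2 = x.1.2 + 1 ∨ y.1.2 = x.1.2 - 1) ∧
    y.2 = x.2 + 1

/-- `Γ₂(r,s)`, the standard double cover of `Γ(r,s)`. -/
def Gamma2 (r s : ℕ) : SimpleGraph ((ZMod r × ZMod s) × ZMod 2) :=
  SimpleGraph.fromRel (gamma2Rel r s)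

/-- `μ : (i,j)_δ ↦ (i+1, j)_δ` on the double cover. -/
def muD (r s : ℕ) : Equiv.Perm ((ZMod r × ZMod s) × ZMod 2) :=
  (mu r s).prodCongr (Equiv.refl (ZMod 2))

/-- `ν : (i,j)_δ ↦ (i, j+1)_δ` on the double cover. -/
def nuD (r s : ℕ) : Equiv.Perm ((ZMod r × ZMod s) × ZMod 2) :=
  (nu r s).prodCongr (Equiv.refl (ZMod 2))

/-- `σ : (i,j)_δ ↦ (i, -j)_{δ+1}` on the double cover. -/
def sigmaD (r s : ℕ) : Equiv.Perm ((ZMod r × ZMod s) × ZMod 2) :=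
  ((Equiv.refl (ZMod r)).prodCongr (Equiv.neg (ZMod s))).prodCongr
    (Equiv.addRight (1 : ZMod 2))

/-- `τ : (i,j)_δ ↦ (-i, -j)_δ` on the double cover. -/
def tauD (r s : ℕ) : Equiv.Perm ((ZMod r × ZMod s) × ZMod 2) :=
  (tau r s).prodCongr (Equiv.refl (ZMod 2))

/-- `G₂(r,s) = ⟨μ, ν, σ, τ⟩` on the double cover. -/
def G2group (r s : ℕ) : Subgroup (Equiv.Perm ((ZMod r × ZMod s) × ZMod 2)) :=
  Subgroup.closure {muD r s, nuD r s, sigmaD r s, tauD r s}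

/-!
If `d ∣ r` with `3 ≤ d < r`, the cyclic group `⟨μ^d⟩` is normal in `G(r,s)` (`ν` centralises `μ`
and `σ` inverts it), and its orbits lie in the fibres of `(i, j) ↦ (i mod d, j)`. In the normal
quotient the orbit of `(0,0)` is therefore adjacent to the three distinct orbits of `(1,1)`,
`(1,-1)` and `(-1,1)`, so the quotient has more than two vertices and is not a cycle. The same
argument with `⟨ν^d⟩` applies to `s`. So neither `r` nor `s` has a proper divisor `≥ 3`, which
leaves `4` and the primes, and the parity hypothesis excludes `(4,4)`.
-/

lemma quotientGraph_adj_mk {Γ : SimpleGraph V} {N : Subgroup (Equiv.Perm V)} {x y : V}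
    (hxy : Γ.Adj x y) (hne : Quotient.mk (orbitSetoid N) x ≠ Quotient.mk (orbitSetoid N) y) :
    (quotientGraph Γ N).Adj (Quotient.mk _ x) (Quotient.mk _ y) := by
  rw [quotientGraph, fromRel_adj]
  exact ⟨hne, Or.inl ⟨x, y, rfl, rfl, hxy⟩⟩

lemma not_isoCycle_of_three_neighbors {Δ : SimpleGraph W} {w w₁ w₂ w₃ : W}
    (h₁ : Δ.Adj w w₁) (h₂ : Δ.Adj w w₂) (h₃ : Δ.Adj w w₃)
    (h₁₂ : w₁ ≠ w₂) (h₁₃ : w₁ ≠ w₃) (h₂₃ : w₂ ≠ w₃) : ¬ IsoCycle Δ := by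
  rintro ⟨m, hm, ⟨e⟩⟩
  obtain ⟨k, rfl⟩ : ∃ k, m = k + 2 := ⟨m - 2, by omega⟩
  have hnbr : ∀ {u}, Δ.Adj w u → e u = e w - 1 ∨ e u = e w + 1 := fun hu => by
    have h := e.map_adj_iff.mpr hu
    rwa [← mem_neighborSet, cycleGraph_neighborSet] at h
  have he := e.injective
  rcases hnbr h₁ with h | h <;> rcases hnbr h₂ with h' | h' <;> rcases hnbr h₃ with h'' | h''
  all_goals
    first
    | exact h₁₂ (he (h.trans h'.symm))
    | exact h₁₃ (he (h.trans h''.symm))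
    | exact h₂₃ (he (h'.trans h''.symm))

lemma two_lt_card_of_two_neighbors [Finite W] {Δ : SimpleGraph W} {w w₁ w₂ : W}
    (h₁ : Δ.Adj w w₁) (h₂ : Δ.Adj w w₂) (h₁₂ : w₁ ≠ w₂) : 2 < Nat.card W := by
  have h : ({w, w₁, w₂} : Set W).ncard = 3 :=
    Set.ncard_eq_three.mpr ⟨w, w₁, w₂, h₁.ne, h₂.ne, h₁₂, rfl⟩
  have := Set.ncard_le_card ({w, w₁, w₂} : Set W)
  omega

lemma normalIn_zpowers_of_conj {G : Type*} [Group G] {S : Set G} {g : G}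
    (hg : g ∈ Subgroup.closure S)
    (hconj : ∀ a ∈ S, a * g * a⁻¹ = g ∨ a * g * a⁻¹ = g⁻¹) :
    NormalIn (Subgroup.zpowers g) (Subgroup.closure S) := by
  refine ⟨Subgroup.zpowers_le.mpr hg, Subgroup.le_normalizer_iff.mp ?_⟩
  refine (Subgroup.closure_le _).mpr fun a ha => ?_
  rw [SetLike.mem_coe, Subgroup.mem_normalizer_iff_map_conj_eq, MonoidHom.map_zpowers]
  change Subgroup.zpowers (a * g * a⁻¹) = _
  rcases hconj a ha with h | h <;> rw [h]
  exact Subgroup.zpowers_inv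

section invariant

variable {Y : Type*}

def invariantPerms (f : V → Y) : Subgroup (Equiv.Perm V) where
  carrier := {g | ∀ x, f (g x) = f x}
  one_mem' _ := rfl
  mul_mem' hg hh x := (hg _).trans (hh x)
  inv_mem' {g} hg x := by simpa using (hg (g⁻¹ x)).symm

lemma apply_eq_of_mk_eq {f : V → Y} {N : Subgroup (Equiv.Perm V)} (hN : N ≤ invariantPerms f)
    {x y : V} (h : Quotient.mk (orbitSetoid N) x = Quotient.mk (orbitSetoid N) y) :
    f x = f y := by
  obtain ⟨n, rfl⟩ := Quotient.exact h
  exact hN n.2 y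

end invariant

def reduceMod {r s a b : ℕ} (ha : a ∣ r) (hb : b ∣ s) : ZMod r × ZMod s →+* ZMod a × ZMod b :=
  (ZMod.castHom ha (ZMod a)).prodMap (ZMod.castHom hb (ZMod b))

lemma reduceMod_apply {r s a b : ℕ} (ha : a ∣ r) (hb : b ∣ s) (x : ZMod r × ZMod s) :
    reduceMod ha hb x = (ZMod.castHom ha (ZMod a) x.1, ZMod.castHom hb (ZMod b) x.2) :=
  rfl

lemma gamma_adj_of_gammaRel {r s : ℕ} {x y : ZMod r × ZMod s} (hne : x ≠ y)
    (h : gammaRel r s x y) :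
    (Gamma r s).Adj x y := by
  rw [Gamma, fromRel_adj]
  exact ⟨hne, Or.inl h⟩

lemma not_degenerate_quotient_gamma {r s a b : ℕ} [NeZero r] [NeZero s] (ha : a ∣ r) (hb : b ∣ s)
    (ha2 : 2 < a) (hb2 : 2 < b) {N : Subgroup (Equiv.Perm (ZMod r × ZMod s))}
    (hN : N ≤ invariantPerms (reduceMod ha hb)) :
    ¬ (Nat.card (Quotient (orbitSetoid N)) ≤ 2 ∨ IsoCycle (quotientGraph (Gamma r s) N)) := by
  have : Fact (1 < a) := ⟨by omega⟩
  have : Fact (1 < b) := ⟨by omega⟩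
  have : Fact (2 < a) := ⟨ha2⟩
  have : Fact (2 < b) := ⟨hb2⟩
  set π : ZMod r × ZMod s → Quotient (orbitSetoid N) := Quotient.mk _
  have hsep : ∀ {x y}, reduceMod ha hb x ≠ reduceMod ha hb y → π x ≠ π y :=
    fun hxy h => hxy (apply_eq_of_mk_eq hN h)
  have h01 : π (0, 0) ≠ π (1, 1) := hsep (by simp [reduceMod_apply, -ZMod.castHom_apply])
  have h02 : π (0, 0) ≠ π (1, -1) := hsep (by simp [reduceMod_apply, -ZMod.castHom_apply])
  have h03 : π (0, 0) ≠ π (-1, 1) := hsep (by simp [reduceMod_apply, -ZMod.castHom_apply])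
  have h12 : π (1, 1) ≠ π (1, -1) :=
    hsep (by simp [reduceMod_apply, -ZMod.castHom_apply, ZMod.neg_one_ne_one.symm])
  have h13 : π (1, 1) ≠ π (-1, 1) :=
    hsep (by simp [reduceMod_apply, -ZMod.castHom_apply, ZMod.neg_one_ne_one.symm])
  have h23 : π (1, -1) ≠ π (-1, 1) :=
    hsep (by simp [reduceMod_apply, -ZMod.castHom_apply, ZMod.neg_one_ne_one.symm])
  have hadj : ∀ {y}, gammaRel r s (0, 0) y → π (0, 0) ≠ π y →
      (quotientGraph (Gamma r s) N).Adj (π (0, 0)) (π y) :=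
    fun hy hne => quotientGraph_adj_mk (gamma_adj_of_gammaRel (ne_of_apply_ne _ hne) hy) hne
  have h₁ := hadj (by simp [gammaRel]) h01
  have h₂ := hadj (by simp [gammaRel]) h02
  have h₃ := hadj (by simp [gammaRel]) h03
  rintro (hcard | hcyc)
  · exact (two_lt_card_of_two_neighbors h₁ h₂ h12).not_ge hcard
  · exact not_isoCycle_of_three_neighbors h₁ h₂ h₃ h12 h13 h23 hcyc

section generators

variable (r s : ℕ)

lemma mu_pow_apply (k : ℕ) (x : ZMod r × ZMod s) : (mu r s ^ k) x = (x.1 + k, x.2) := by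
  induction k with
  | zero => simp
  | succ k ih =>
    rw [pow_succ', Equiv.Perm.mul_apply, ih]
    simp [mu, add_assoc]

lemma nu_pow_apply (k : ℕ) (x : ZMod r × ZMod s) : (nu r s ^ k) x = (x.1, x.2 + k) := by
  induction k with
  | zero => simp
  | succ k ih =>
    rw [pow_succ', Equiv.Perm.mul_apply, ih]
    simp [nu, add_assoc]

lemma commute_mu_nu : Commute (mu r s) (nu r s) := Equiv.ext fun _ => rfl

lemma commute_sigma_nu : Commute (sigma r s) (nu r s) := Equiv.ext fun _ => rfl

lemma sigma_mul_mu_mul_sigma_inv : sigma r s * mu r s * (sigma r s)⁻¹ = (mu r s)⁻¹ := by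
  rw [mul_inv_eq_iff_eq_mul, eq_inv_mul_iff_mul_eq]
  ext x <;> simp [mu, sigma]

end generators

section divisors

variable {r s d : ℕ}

lemma mu_pow_ne_one (hd : 0 < d) (hdr : d < r) : mu r s ^ d ≠ 1 := by
  intro h
  have h0 : ((d : ℕ) : ZMod r) = 0 := by
    simpa [mu_pow_apply] using congrArg (fun g => (g (0, 0)).1) h
  rw [ZMod.natCast_eq_zero_iff] at h0
  exact (Nat.le_of_dvd hd h0).not_gt hdr

theorem not_isBasic_of_dvd_left (hs : 3 ≤ s) (hd : d ∣ r) (hd3 : 3 ≤ d) (hdr : d < r) :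
    ¬ IsBasic (Gamma r s) (Ggroup r s) := by
  have : NeZero r := ⟨by omega⟩
  have : NeZero s := ⟨by omega⟩
  intro hbasic
  have hmem : mu r s ^ d ∈ Ggroup r s := pow_mem (Subgroup.subset_closure (by simp)) d
  have hnormal : NormalIn (Subgroup.zpowers (mu r s ^ d)) (Ggroup r s) := by
    refine normalIn_zpowers_of_conj hmem ?_
    simp only [Set.mem_insert_iff, Set.mem_singleton_iff, forall_eq_or_imp, forall_eq]
    refine ⟨Or.inl ?_, Or.inl ?_, Or.inr ?_⟩
    · exact ((Commute.refl _).pow_right d).mul_inv_cancel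
    · exact ((commute_mu_nu r s).symm.pow_right d).mul_inv_cancel
    · rw [← conj_pow, sigma_mul_mu_mul_sigma_inv, inv_pow]
  have hinv : Subgroup.zpowers (mu r s ^ d) ≤ invariantPerms (reduceMod hd (dvd_refl s)) := by
    refine Subgroup.zpowers_le.mpr fun x => ?_
    simp [reduceMod_apply, mu_pow_apply, -ZMod.castHom_apply]
  exact not_degenerate_quotient_gamma hd (dvd_refl s) (by omega) (by omega) hinv
    (hbasic _ hnormal (Subgroup.zpowers_ne_bot.mpr (mu_pow_ne_one (by omega) hdr)))

lemma nu_pow_ne_one (hd : 0 < d) (hds : d < s) : nu r s ^ d ≠ 1 := by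
  intro h
  have h0 : ((d : ℕ) : ZMod s) = 0 := by
    simpa [nu_pow_apply] using congrArg (fun g => (g (0, 0)).2) h
  rw [ZMod.natCast_eq_zero_iff] at h0
  exact (Nat.le_of_dvd hd h0).not_gt hds

theorem not_isBasic_of_dvd_right (hr : 3 ≤ r) (hd : d ∣ s) (hd3 : 3 ≤ d) (hds : d < s) :
    ¬ IsBasic (Gamma r s) (Ggroup r s) := by
  have : NeZero r := ⟨by omega⟩
  have : NeZero s := ⟨by omega⟩
  intro hbasic
  have hmem : nu r s ^ d ∈ Ggroup r s := pow_mem (Subgroup.subset_closure (by simp)) d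
  have hnormal : NormalIn (Subgroup.zpowers (nu r s ^ d)) (Ggroup r s) := by
    refine normalIn_zpowers_of_conj hmem ?_
    simp only [Set.mem_insert_iff, Set.mem_singleton_iff, forall_eq_or_imp, forall_eq]
    refine ⟨Or.inl ?_, Or.inl ?_, Or.inl ?_⟩
    · exact ((commute_mu_nu r s).pow_right d).mul_inv_cancel
    · exact ((Commute.refl _).pow_right d).mul_inv_cancel
    · exact ((commute_sigma_nu r s).pow_right d).mul_inv_cancel
  have hinv : Subgroup.zpowers (nu r s ^ d) ≤ invariantPerms (reduceMod (dvd_refl r) hd) := by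
    refine Subgroup.zpowers_le.mpr fun x => ?_
    simp [reduceMod_apply, nu_pow_apply, -ZMod.castHom_apply]
  exact not_degenerate_quotient_gamma (dvd_refl r) hd (by omega) (by omega) hinv
    (hbasic _ hnormal (Subgroup.zpowers_ne_bot.mpr (nu_pow_ne_one (by omega) hds)))

end divisors

lemma eq_four_or_prime {n : ℕ} (hn : 2 ≤ n) (h : ∀ d, d ∣ n → 3 ≤ d → ¬ d < n) :
    n = 4 ∨ n.Prime := by
  refine or_iff_not_imp_right.mpr fun hnp => ?_
  have hp : n.minFac.Prime := Nat.minFac_prime (by omega)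
  obtain ⟨q, hq⟩ := Nat.minFac_dvd n
  have hqn : q ∣ n := Dvd.intro_left _ hq.symm
  have hq1 : q ≠ 1 := by rintro rfl; rw [mul_one] at hq; exact hnp (by rw [hq]; exact hp)
  have hq0 : q ≠ 0 := by rintro rfl; omega
  have hpq : n.minFac ≤ q := Nat.minFac_le_of_dvd (by omega) hqn
  have hp2 := hp.two_le
  have hq2 : q = 2 := by
    by_contra hq2
    exact h q hqn (by omega) (by nlinarith)
  subst hq2
  omega

/-- if `(Γ(r,s), G(r,s))` (with `r,s ≥ 3`, at least one odd) is basic of cycle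
type, then `(r,s)` is `(4,p)`, `(p,4)` or `(p,q)` for odd primes `p`, `q`. -/
theorem stmt0 (r s : ℕ) (hr : 3 ≤ r) (hs : 3 ≤ s) (hodd : Odd r ∨ Odd s)
    (hbasic : BasicOfCycleType (Gamma r s) (Ggroup r s)) :
    (∃ p : ℕ, p.Prime ∧ Odd p ∧ r = 4 ∧ s = p) ∨
      (∃ p : ℕ, p.Prime ∧ Odd p ∧ r = p ∧ s = 4) ∨
      (∃ p q : ℕ, p.Prime ∧ Odd p ∧ q.Prime ∧ Odd q ∧ r = p ∧ s = q) := by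
  have hr' : r = 4 ∨ r.Prime := eq_four_or_prime (by omega)
    fun d hd hd3 hdr => not_isBasic_of_dvd_left hs hd hd3 hdr hbasic.1
  have hs' : s = 4 ∨ s.Prime := eq_four_or_prime (by omega)
    fun d hd hd3 hds => not_isBasic_of_dvd_right hr hd hd3 hds hbasic.1
  have hodd_of_prime : ∀ {n : ℕ}, 3 ≤ n → n.Prime → Odd n := fun hn hp =>
    hp.odd_of_ne_two (by omega)
  rcases hr' with rfl | hrp <;> rcases hs' with rfl | hsp
  · rcases hodd with h | h <;> exact absurd h (by decide)
  · exact Or.inl ⟨s, hsp, hodd_of_prime hs hsp, rfl, rfl⟩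
  · exact Or.inr (Or.inl ⟨r, hrp, hodd_of_prime hr hrp, rfl, rfl⟩)
  · exact Or.inr (Or.inr ⟨r, s, hrp, hodd_of_prime hr hrp, hsp, hodd_of_prime hs hsp, rfl, rfl⟩)

end OG4
end

section
/- Let (r,s) be one of (4,4), (4,2p), (2p,4), or (2p,2q), where p and q are odd primes (not necessarily distinct). Then for every nontrivial normal subgroup L of H⁺(r,s), the normal quotient Γ⁺(r,s)_L either has at most 2 vertices or is isomorphic to a cycle graph C_m for some m ≥ 3; moreover the normal quotients of Γ⁺(r,s) by ⟨μ²⟩ and by ⟨ν²⟩ are each isomorphic to a cycle C_m with m ≥ 3. In particular, (Γ⁺(r,s), H⁺(r,s)) is basic of cycle type. -/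
open SimpleGraph

namespace OG4

variable {V : Type*} {W : Type*}

/-!
Write `r = 2m`, `s = 2n` with `m`, `n` prime. Every element of `H⁺` is an affine map
`(i, j) ↦ (±i + k, ±j + l)` whose shifts are even exactly when the two signs agree, and the
commutator of such a map with `τ`, `σμν` or `τσμν` is a translation. So the translations in a
nontrivial normal subgroup `L` form a nonzero group `T` of even vectors, and since the even
residues modulo `2m` form a group of prime order, `T` either contains all even horizontal
translations or meets them trivially, and likewise for vertical ones.

* `T` contains both: `L` is transitive on each of the two parity classes of `X⁺`.
* `T` contains only the horizontal ones: then no element of `L` flips `j`, and the orbits are the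
  rows (quotient `C_s`), or pairs of opposite rows (quotient `C_n`) when `L` contains a glide
  `(i, j) ↦ (-i + κ, j + n)`. Vertical translations are symmetric.
* `T` contains neither: then `T = {0, (m, n)}` with `m = n = 2`, and every element of `L` rotates
  the `4`-cycle formed by the orbits of the translation by `(2, 2)`, so the quotient is `C_4` or
  has at most two vertices.

The quotients by `⟨μ²⟩` and `⟨ν²⟩` are the row and column cycles.
-/

section OrbitQuotient

variable {V : Type*}

lemma mk_eq_mk_iff {L : Subgroup (Equiv.Perm V)} {x y : V} :
    Quotient.mk (orbitSetoid L) x = Quotient.mk (orbitSetoid L) y ↔ ∃ g ∈ L, g y = x := by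
  rw [Quotient.eq, orbitSetoid, MulAction.orbitRel_apply, MulAction.mem_orbit_iff]
  exact ⟨fun ⟨g, hg⟩ => ⟨g, g.2, hg⟩, fun ⟨g, hgL, hg⟩ => ⟨⟨g, hgL⟩, hg⟩⟩

lemma card_quotient_le {L : Subgroup (Equiv.Perm V)} {β : Type*} [Finite β] (d : V → β)
    (hd : ∀ x y, d x = d y → ∃ g ∈ L, g y = x) :
    Nat.card (Quotient (orbitSetoid L)) ≤ Nat.card β := by
  let pick : Set.range d → Quotient (orbitSetoid L) := fun b => Quotient.mk _ b.2.choose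
  have hpick : Function.Surjective pick := by
    rintro ⟨z⟩
    refine ⟨⟨d z, z, rfl⟩, mk_eq_mk_iff.mpr (hd _ _ ?_)⟩
    exact Exists.choose_spec (⟨z, rfl⟩ : d z ∈ Set.range d)
  exact (Nat.card_le_card_of_surjective pick hpick).trans (Finite.card_subtype_le _)

def IsCycleCoord (Γ : SimpleGraph V) {m : ℕ} (c : V → ZMod m) : Prop :=
  Function.Surjective c ∧ (∀ x y, Γ.Adj x y → c y = c x + 1 ∨ c x = c y + 1) ∧
    ∀ x, ∃ y, Γ.Adj x y ∧ c y = c x + 1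

lemma IsCycleCoord.comp {Γ : SimpleGraph V} {m k : ℕ} {c : V → ZMod m} (hc : IsCycleCoord Γ c)
    (φ : ZMod m →+* ZMod k) (hφ : Function.Surjective φ) : IsCycleCoord Γ (φ ∘ c) := by
  obtain ⟨hsurj, hadj, hstep⟩ := hc
  refine ⟨hφ.comp hsurj, fun x y hxy => ?_, fun x => ?_⟩
  · rcases hadj x y hxy with h | h <;> simp [h]
  · obtain ⟨y, hxy, h⟩ := hstep x
    exact ⟨y, hxy, by simp [h]⟩

theorem isoCycle_quotientGraph {Γ : SimpleGraph V} {L : Subgroup (Equiv.Perm V)} {m : ℕ}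
    (hm : 3 ≤ m) {c : V → ZMod m} (hc : IsCycleCoord Γ c)
    (horbit : ∀ x y, (∃ g ∈ L, g y = x) ↔ c x = c y) : IsoCycle (quotientGraph Γ L) := by
  obtain ⟨k, rfl⟩ : ∃ k, m = k + 2 := ⟨m - 2, by omega⟩
  obtain ⟨hsurj, hadj, hstep⟩ := hc
  have hfib : ∀ x y, Quotient.mk (orbitSetoid L) x = Quotient.mk _ y ↔ c x = c y :=
    fun x y => mk_eq_mk_iff.trans (horbit x y)
  have : Fact (1 < k + 2) := ⟨by omega⟩
  let e : Quotient (orbitSetoid L) ≃ ZMod (k + 2) :=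
    Equiv.ofBijective (Quotient.lift c fun x y h => (hfib x y).mp (Quotient.sound h))
      ⟨by rintro ⟨x⟩ ⟨y⟩ h; exact (hfib x y).mpr h,
        fun j => let ⟨x, hx⟩ := hsurj j; ⟨Quotient.mk _ x, hx⟩⟩
  have hadj_iff : ∀ x y, (quotientGraph Γ L).Adj (Quotient.mk _ x) (Quotient.mk _ y) ↔
      c y = c x + 1 ∨ c x = c y + 1 := by
    intro x y
    simp only [quotientGraph, SimpleGraph.fromRel_adj, ne_eq, hfib]
    constructor
    · rintro ⟨-, ⟨x', y', hx, hy, h⟩ | ⟨y', x', hy, hx, h⟩⟩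
      · rw [← hx, ← hy]; exact hadj x' y' h
      · rw [← hx, ← hy]; exact (hadj y' x' h).symm
    · intro h
      refine ⟨fun hxy => by rcases h with h | h <;> simp [hxy] at h, ?_⟩
      rcases h with h | h
      · obtain ⟨y', hxy', hy'⟩ := hstep x
        exact Or.inl ⟨x, y', rfl, hy'.trans h.symm, hxy'⟩
      · obtain ⟨x', hyx', hx'⟩ := hstep y
        exact Or.inr ⟨y, x', rfl, hx'.trans h.symm, hyx'⟩
  refine ⟨k + 2, hm, ⟨⟨e, @fun a b => ?_⟩⟩⟩
  induction a using Quotient.inductionOn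
  induction b using Quotient.inductionOn
  rw [hadj_iff, SimpleGraph.cycleGraph_adj]
  change c _ - c _ = 1 ∨ c _ - c _ = 1 ↔ _
  rw [sub_eq_iff_eq_add', sub_eq_iff_eq_add', or_comm]

end OrbitQuotient

section EvenModulus

variable {m : ℕ}

abbrev parity (m : ℕ) : ZMod (2 * m) →+* ZMod 2 := ZMod.castHom (dvd_mul_right 2 m) (ZMod 2)

abbrev modHalf (m : ℕ) : ZMod (2 * m) →+* ZMod m := ZMod.castHom (dvd_mul_left m 2) (ZMod m)

lemma parity_apply [NeZero m] (x : ZMod (2 * m)) : parity m x = x.val := by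
  rw [ZMod.castHom_apply, ZMod.cast_eq_val]

lemma parity_intCast_units (ε : ℤˣ) : parity m ε = 1 := by
  rcases Int.units_eq_one_or ε with rfl | rfl <;> simp

lemma two_mul_eq_zero_iff [NeZero m] {x : ZMod (2 * m)} : 2 * x = 0 ↔ modHalf m x = 0 := by
  have h2x : 2 * x = ((2 * x.val : ℕ) : ZMod (2 * m)) := by push_cast; rw [ZMod.natCast_zmod_val]
  rw [h2x, ZMod.natCast_eq_zero_iff, Nat.mul_dvd_mul_iff_left two_pos, ZMod.castHom_apply,
    ZMod.cast_eq_val, ZMod.natCast_eq_zero_iff]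

lemma eq_zero_or_eq_of_two_mul_eq_zero [NeZero m] {x : ZMod (2 * m)} (hx : 2 * x = 0) :
    x = 0 ∨ x = m := by
  rw [two_mul_eq_zero_iff, ← ZMod.natCast_zmod_val x, map_natCast,
    ZMod.natCast_eq_zero_iff] at hx
  obtain ⟨c, hc⟩ := hx
  have hlt : m * c < m * 2 := by rw [← hc, mul_comm m]; exact ZMod.val_lt x
  replace hlt := Nat.lt_of_mul_lt_mul_left hlt
  rw [← ZMod.natCast_zmod_val x, hc]
  interval_cases c <;> simp

lemma exists_eq_two_mul [NeZero m] {x : ZMod (2 * m)} (hx : parity m x = 0) :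
    ∃ t, x = 2 * t := by
  rw [parity_apply, ZMod.natCast_eq_zero_iff] at hx
  obtain ⟨j, hj⟩ := hx
  exact ⟨j, by rw [← ZMod.natCast_zmod_val x, hj]; push_cast; rfl⟩

/-- The even residues form a cyclic group of prime order `m`. -/
lemma mem_of_parity_eq_zero [Fact m.Prime] {K : AddSubgroup (ZMod (2 * m))} {γ δ : ZMod (2 * m)}
    (hγK : γ ∈ K) (hγ : parity m γ = 0) (hγ0 : γ ≠ 0) (hδ : parity m δ = 0) : δ ∈ K := by
  obtain ⟨t, rfl⟩ := exists_eq_two_mul hγ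
  obtain ⟨u, rfl⟩ := exists_eq_two_mul hδ
  have ht : modHalf m t ≠ 0 := fun h => hγ0 (two_mul_eq_zero_iff.mpr h)
  set N := (modHalf m u / modHalf m t).val
  have hN : 2 * u = N • (2 * t) := by
    rw [nsmul_eq_mul, ← sub_eq_zero, mul_left_comm, ← mul_sub, two_mul_eq_zero_iff, map_sub,
      map_mul, map_natCast, ZMod.natCast_zmod_val, div_mul_cancel₀ _ ht, sub_self]
  rw [hN]
  exact K.nsmul_mem hγK N

lemma two_ne_zero_of_one_lt [Fact (1 < m)] : (2 : ZMod (2 * m)) ≠ 0 := by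
  have h2 : ((2 : ℕ) : ZMod (2 * m)) ≠ 0 := by
    rw [ne_eq, ZMod.natCast_eq_zero_iff]
    intro h
    have := Nat.le_of_dvd two_pos h
    have : 1 < m := Fact.out
    omega
  exact_mod_cast h2

end EvenModulus

section Affine

@[simp]
lemma intCast_units_mul_self {R : Type*} [Ring R] (ε : ℤˣ) (a : R) : (ε : R) * (ε * a) = a := by
  rw [← mul_assoc, ← Int.cast_mul, Int.units_coe_mul_self, Int.cast_one, one_mul]

variable {r s : ℕ}

def IsAffine (f : Equiv.Perm (XPlus r s)) (ε₁ ε₂ : ℤˣ) (k : ZMod r) (l : ZMod s) : Prop :=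
  ∀ x : XPlus r s, (f x).val = (ε₁ * x.val.1 + k, ε₂ * x.val.2 + l)

variable {f g : Equiv.Perm (XPlus r s)} {ε₁ ε₂ δ₁ δ₂ : ℤˣ} {k u : ZMod r} {l v : ZMod s}

lemma IsAffine.eq (hf : IsAffine f ε₁ ε₂ k l) (hg : IsAffine g ε₁ ε₂ k l) : f = g :=
  Equiv.ext fun x => Subtype.ext ((hf x).trans (hg x).symm)

lemma IsAffine.congr (hf : IsAffine f ε₁ ε₂ k l) {ε₁' ε₂' : ℤˣ} {k' : ZMod r} {l' : ZMod s}
    (h₁ : ε₁ = ε₁') (h₂ : ε₂ = ε₂') (hk : k = k') (hl : l = l') : IsAffine f ε₁' ε₂' k' l' :=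
  h₁ ▸ h₂ ▸ hk ▸ hl ▸ hf

lemma isAffine_one : IsAffine (1 : Equiv.Perm (XPlus r s)) 1 1 0 0 := fun x => by simp

lemma IsAffine.mul (hf : IsAffine f ε₁ ε₂ k l) (hg : IsAffine g δ₁ δ₂ u v) :
    IsAffine (f * g) (ε₁ * δ₁) (ε₂ * δ₂) (ε₁ * u + k) (ε₂ * v + l) := fun x => by
  rw [Equiv.Perm.mul_apply, hf, hg]
  simp only [Units.val_mul, Int.cast_mul, Prod.mk.injEq]
  constructor <;> ring

lemma IsAffine.inv (hf : IsAffine f ε₁ ε₂ k l) :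
    IsAffine f⁻¹ ε₁ ε₂ (-(ε₁ * k)) (-(ε₂ * l)) := fun x => by
  have h := hf (f⁻¹ x)
  rw [show f (f⁻¹ x) = x from f.apply_symm_apply x] at h
  rw [h]
  ext <;> simp [mul_add]

lemma IsAffine.commutator (hg : IsAffine g δ₁ δ₂ u v) (hf : IsAffine f ε₁ ε₂ k l) :
    IsAffine (g * f * g⁻¹ * f⁻¹) 1 1 ((δ₁ - 1) * k + (1 - ε₁) * u)
      ((δ₂ - 1) * l + (1 - ε₂) * v) := by
  refine (((hg.mul hf).mul hg.inv).mul hf.inv).congr ?_ ?_ ?_ ?_ <;>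
    rcases Int.units_eq_one_or δ₁ with rfl | rfl <;>
    rcases Int.units_eq_one_or ε₁ with rfl | rfl <;>
    rcases Int.units_eq_one_or δ₂ with rfl | rfl <;>
    rcases Int.units_eq_one_or ε₂ with rfl | rfl <;>
    simp <;> ring

end Affine

lemma gammaPlus_adj_iff {r s : ℕ} {x y : XPlus r s} :
    (GammaPlus r s).Adj x y ↔ x ≠ y ∧ gammaRel r s x.val y.val := by
  have hsymm : ∀ a b, gammaRel r s a b → gammaRel r s b a := by
    rintro a b ⟨h₁ | h₁, h₂ | h₂⟩ <;> refine ⟨?_, ?_⟩ <;> simp [h₁, h₂]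
  simp only [GammaPlus, SimpleGraph.induce_adj, Gamma, SimpleGraph.fromRel_adj, ne_eq,
    Subtype.ext_iff]
  exact and_congr_right fun _ => or_iff_left_of_imp (hsymm _ _)

section Translations

variable {r s : ℕ}

def translations (L : Subgroup (Equiv.Perm (XPlus r s))) : AddSubgroup (ZMod r × ZMod s) where
  carrier := {v | ∃ f ∈ L, IsAffine f 1 1 v.1 v.2}
  zero_mem' := ⟨1, L.one_mem, isAffine_one⟩
  add_mem' := by
    rintro _ _ ⟨f, hf, hfa⟩ ⟨g, hg, hga⟩
    exact ⟨f * g, L.mul_mem hf hg, (hfa.mul hga).congr (mul_one 1) (mul_one 1)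
      (by simp [add_comm]) (by simp [add_comm])⟩
  neg_mem' := by
    rintro _ ⟨f, hf, hfa⟩
    exact ⟨f⁻¹, L.inv_mem hf, hfa.inv.congr rfl rfl (by simp) (by simp)⟩

variable {L : Subgroup (Equiv.Perm (XPlus r s))}

lemma exists_apply_eq_of_sub_mem_translations {x y : XPlus r s}
    (h : x.val - y.val ∈ translations L) : ∃ g ∈ L, g y = x := by
  obtain ⟨g, hg, hga⟩ := h
  exact ⟨g, hg, Subtype.ext (by simp [hga y])⟩

lemma commutator_mem_translations {G : Subgroup (Equiv.Perm (XPlus r s))} (hL : NormalIn L G)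
    {f g : Equiv.Perm (XPlus r s)} {ε₁ ε₂ δ₁ δ₂ : ℤˣ} {k u : ZMod r} {l v : ZMod s}
    (hg : g ∈ G) (hga : IsAffine g δ₁ δ₂ u v) (hf : f ∈ L) (hfa : IsAffine f ε₁ ε₂ k l) :
    ((δ₁ - 1) * k + (1 - ε₁) * u, (δ₂ - 1) * l + (1 - ε₂) * v) ∈ translations L :=
  ⟨_, L.mul_mem (hL.2 g hg f hf) (L.inv_mem hf), hga.commutator hfa⟩

end Translations

section Generators

variable {r s : ℕ} (hr : 2 ∣ r) (hr0 : r ≠ 0) (hs : 2 ∣ s) (hs0 : s ≠ 0)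

lemma isAffine_muSqP : IsAffine (muSqP r s hr hr0) 1 1 2 0 := fun x => by
  ext <;> simp [muSqP, muSq]

lemma isAffine_nuSqP : IsAffine (nuSqP r s hs hs0) 1 1 0 2 := fun x => by
  ext <;> simp [nuSqP, nuSq]

lemma isAffine_sigmaMuNuP : IsAffine (sigmaMuNuP r s hr hr0 hs hs0) (-1) 1 (-1) 1 := fun x => by
  ext <;> simp [sigmaMuNuP, sigmaMuNu, add_comm]

lemma isAffine_tauP : IsAffine (tauP r s hr hr0 hs hs0) (-1) (-1) 0 0 := fun x => by
  ext <;> simp [tauP, tau]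

lemma isAffine_tauP_mul_sigmaMuNuP :
    IsAffine (tauP r s hr hr0 hs hs0 * sigmaMuNuP r s hr hr0 hs hs0) 1 (-1) 1 (-1) :=
  ((isAffine_tauP hr hr0 hs hs0).mul (isAffine_sigmaMuNuP hr hr0 hs hs0)).congr
    (by decide) (by decide) (by simp) (by simp)

end Generators

section EvenTorus

variable {m n : ℕ}

/-- The invariant of `H⁺` among the automorphisms of `Γ⁺`: `μν`, say, has equal signs but odd
shifts. -/
def IsHPlusMap (f : Equiv.Perm (XPlus (2 * m) (2 * n))) : Prop :=
  ∃ ε₁ ε₂ k l, IsAffine f ε₁ ε₂ k l ∧ (parity m k = 0 ↔ ε₁ = ε₂) ∧ (parity n l = 0 ↔ ε₁ = ε₂)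

lemma parity_condition_mul : ∀ {a b : ZMod 2} {ε₁ ε₂ δ₁ δ₂ : ℤˣ},
    (a = 0 ↔ ε₁ = ε₂) → (b = 0 ↔ δ₁ = δ₂) → (b + a = 0 ↔ ε₁ * δ₁ = ε₂ * δ₂) := by
  decide

lemma IsHPlusMap.mul {f g : Equiv.Perm (XPlus (2 * m) (2 * n))} (hf : IsHPlusMap f)
    (hg : IsHPlusMap g) : IsHPlusMap (f * g) := by
  obtain ⟨ε₁, ε₂, k, l, hfa, hk, hl⟩ := hf
  obtain ⟨δ₁, δ₂, u, v, hga, hu, hv⟩ := hg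
  refine ⟨_, _, _, _, hfa.mul hga, ?_, ?_⟩ <;>
    simp only [map_add, map_mul, parity_intCast_units, one_mul]
  exacts [parity_condition_mul hk hu, parity_condition_mul hl hv]

lemma IsHPlusMap.inv {f : Equiv.Perm (XPlus (2 * m) (2 * n))} (hf : IsHPlusMap f) :
    IsHPlusMap f⁻¹ := by
  obtain ⟨ε₁, ε₂, k, l, hfa, hk, hl⟩ := hf
  refine ⟨_, _, _, _, hfa.inv, ?_, ?_⟩ <;>
    simpa only [map_neg, map_mul, parity_intCast_units, one_mul, neg_eq_zero]

lemma isHPlusMap_of_mem {hre : 2 ∣ 2 * m} {hr0 : 2 * m ≠ 0} {hse : 2 ∣ 2 * n} {hs0 : 2 * n ≠ 0}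
    {f : Equiv.Perm (XPlus (2 * m) (2 * n))} (hf : f ∈ HPlusGroup (2 * m) (2 * n) hre hr0 hse hs0) :
    IsHPlusMap f := by
  induction hf using Subgroup.closure_induction with
  | mem g hg =>
    rcases hg with rfl | rfl | rfl
    · exact ⟨_, _, _, _, isAffine_muSqP _ _, by rw [map_ofNat]; decide, by simp⟩
    · exact ⟨_, _, _, _, isAffine_sigmaMuNuP _ _ _ _, by simp, by simp⟩
    · exact ⟨_, _, _, _, isAffine_tauP _ _ _ _, by simp, by simp⟩
  | one => exact ⟨_, _, _, _, isAffine_one, by simp, by simp⟩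
  | mul f g _ _ hf hg => exact hf.mul hg
  | inv f _ hf => exact hf.inv

variable [NeZero m] [NeZero n]

lemma mem_XPlus_iff {x : ZMod (2 * m) × ZMod (2 * n)} :
    x ∈ XPlus (2 * m) (2 * n) ↔ parity m x.1 = parity n x.2 := by
  rw [parity_apply, parity_apply, ZMod.natCast_eq_natCast_iff']
  rfl

lemma exists_adj_add_one_add_one (x : XPlus (2 * m) (2 * n)) :
    ∃ y, (GammaPlus (2 * m) (2 * n)).Adj x y ∧ y.val = (x.val.1 + 1, x.val.2 + 1) := by
  have hx := mem_XPlus_iff.mp x.2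
  have : Fact (1 < 2 * n) := ⟨by have := NeZero.pos n; omega⟩
  refine ⟨⟨_, mem_XPlus_iff.mpr (by rw [map_add, map_add, hx, map_one, map_one])⟩,
    gammaPlus_adj_iff.mpr ⟨fun h => ?_, ?_⟩, rfl⟩
  · simpa using congrArg (fun z : XPlus _ _ => z.val.2) h
  · exact ⟨Or.inl rfl, Or.inl rfl⟩

lemma isCycleCoord_fst : IsCycleCoord (GammaPlus (2 * m) (2 * n)) fun x => x.val.1 := by
  refine ⟨fun i => ⟨⟨(i, (i.val : ZMod (2 * n))), mem_XPlus_iff.mpr ?_⟩, rfl⟩, ?_, ?_⟩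
  · rw [map_natCast, parity_apply]
  · intro x y hxy
    rcases (gammaPlus_adj_iff.mp hxy).2.1 with h | h
    · exact Or.inl h
    · exact Or.inr (by simp [h])
  · intro x
    obtain ⟨y, hxy, hy⟩ := exists_adj_add_one_add_one x
    exact ⟨y, hxy, by simp [hy]⟩

lemma isCycleCoord_snd : IsCycleCoord (GammaPlus (2 * m) (2 * n)) fun x => x.val.2 := by
  refine ⟨fun j => ⟨⟨((j.val : ZMod (2 * m)), j), mem_XPlus_iff.mpr ?_⟩, rfl⟩, ?_, ?_⟩
  · rw [map_natCast, parity_apply]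
  · intro x y hxy
    rcases (gammaPlus_adj_iff.mp hxy).2.2 with h | h
    · exact Or.inl h
    · exact Or.inr (by simp [h])
  · intro x
    obtain ⟨y, hxy, hy⟩ := exists_adj_add_one_add_one x
    exact ⟨y, hxy, by simp [hy]⟩

end EvenTorus

section AffineUnique

variable {m n : ℕ} [Fact (1 < m)] [Fact (1 < n)]

lemma units_eq_of_cast_eq {ε ε' : ℤˣ} (h : (ε : ZMod (2 * m)) = ε') : ε = ε' := by
  rcases Int.units_eq_one_or ε with rfl | rfl <;> rcases Int.units_eq_one_or ε' with rfl | rfl <;>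
    simp only [Units.val_one, Units.val_neg, Int.cast_one, Int.cast_neg] at h
  all_goals first
    | rfl
    | exact absurd (by linear_combination h) (two_ne_zero_of_one_lt (m := m))
    | exact absurd (by linear_combination -h) (two_ne_zero_of_one_lt (m := m))

lemma isAffine_unique {f : Equiv.Perm (XPlus (2 * m) (2 * n))}
    {ε₁ ε₂ ε₁' ε₂' : ℤˣ} {k k' : ZMod (2 * m)} {l l' : ZMod (2 * n)}
    (h : IsAffine f ε₁ ε₂ k l) (h' : IsAffine f ε₁' ε₂' k' l') :
    ε₁ = ε₁' ∧ ε₂ = ε₂' ∧ k = k' ∧ l = l' := by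
  have h₀ := (h ⟨0, mem_XPlus_iff.mpr (by simp)⟩).symm.trans (h' _)
  have h₁ := (h ⟨1, mem_XPlus_iff.mpr (by simp)⟩).symm.trans (h' _)
  simp only [Prod.fst_zero, Prod.snd_zero, mul_zero, zero_add, Prod.mk.injEq] at h₀
  simp only [Prod.fst_one, Prod.snd_one, mul_one, Prod.mk.injEq, h₀.1, h₀.2,
    add_left_inj] at h₁
  exact ⟨units_eq_of_cast_eq h₁.1, units_eq_of_cast_eq h₁.2, h₀⟩

lemma IsHPlusMap.parity_iff {f : Equiv.Perm (XPlus (2 * m) (2 * n))} (hf : IsHPlusMap f)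
    {ε₁ ε₂ : ℤˣ} {k : ZMod (2 * m)} {l : ZMod (2 * n)} (h : IsAffine f ε₁ ε₂ k l) :
    (parity m k = 0 ↔ ε₁ = ε₂) ∧ (parity n l = 0 ↔ ε₁ = ε₂) := by
  obtain ⟨ε₁', ε₂', k', l', h', hk, hl⟩ := hf
  obtain ⟨rfl, rfl, rfl, rfl⟩ := isAffine_unique h h'
  exact ⟨hk, hl⟩

end AffineUnique

section Quotients

/-- The quotient is `C_{2n}` if no element of `L` moves `c`, and `C_n` (the fibres of `c`
modulo `n`) once some element shifts `c` by `n`. -/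
theorem isoCycle_quotientGraph_of_shifts {V : Type*} {Γ : SimpleGraph V}
    {L : Subgroup (Equiv.Perm V)} {n : ℕ} [Fact n.Prime] {c : V → ZMod (2 * n)}
    (hc : IsCycleCoord Γ c)
    (hshift : ∀ f ∈ L, ∃ l, (l = 0 ∨ parity n l ≠ 0 ∧ 2 * l = 0) ∧ ∀ x, c (f x) = c x + l)
    (hfibre : ∀ x y, c x = c y → ∃ g ∈ L, g y = x) : IsoCycle (quotientGraph Γ L) := by
  have hn2 := (Fact.out : n.Prime).two_le
  by_cases hfix : ∀ f ∈ L, ∀ x, c (f x) = c x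
  · refine isoCycle_quotientGraph (by omega) hc fun x y => ⟨?_, hfibre x y⟩
    rintro ⟨g, hg, rfl⟩
    exact hfix g hg y
  push Not at hfix
  obtain ⟨g, hg, y₀, hy₀⟩ := hfix
  obtain ⟨l, hl | ⟨hlodd, hl2⟩, hgl⟩ := hshift g hg
  · exact absurd (by rw [hgl, hl, add_zero]) hy₀
  have hln : l = n := (eq_zero_or_eq_of_two_mul_eq_zero hl2).resolve_left
    (by rintro rfl; exact hlodd (map_zero _))
  have hn3 : 3 ≤ n := by
    rw [hln, map_natCast] at hlodd
    have hodd : ¬ Even n := fun h => hlodd (ZMod.natCast_eq_zero_iff_even.mpr h)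
    have : n ≠ 2 := by rintro rfl; exact hodd even_two
    omega
  refine isoCycle_quotientGraph hn3 (hc.comp (modHalf n) (ZMod.castHom_surjective _))
    fun x y => ⟨?_, fun hxy => ?_⟩
  · rintro ⟨f, hf, rfl⟩
    obtain ⟨l', hl', hfl'⟩ := hshift f hf
    have : modHalf n l' = 0 := by
      rcases hl' with rfl | ⟨-, h⟩
      · exact map_zero _
      · exact two_mul_eq_zero_iff.mp h
    simp only [Function.comp_apply, hfl', map_add, this, add_zero]
  · have h2 : 2 * (c x - c y) = 0 := by
      rw [two_mul_eq_zero_iff, map_sub, sub_eq_zero]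
      exact hxy
    rcases eq_zero_or_eq_of_two_mul_eq_zero h2 with h | h
    · exact hfibre x y (sub_eq_zero.mp h)
    · obtain ⟨f, hf, hfx⟩ := hfibre x (g y) (by rw [hgl, hln, ← h, add_sub_cancel])
      exact ⟨f * g, L.mul_mem hf hg, hfx⟩

variable {m n : ℕ} [NeZero m] [NeZero n] {L : Subgroup (Equiv.Perm (XPlus (2 * m) (2 * n)))}

lemma exists_apply_eq_of_snd_eq
    (hP : ∀ γ, parity m γ = 0 → (γ, 0) ∈ translations L) {x y : XPlus (2 * m) (2 * n)}
    (h : x.val.2 = y.val.2) : ∃ g ∈ L, g y = x := by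
  have hxy : x.val - y.val = (x.val.1 - y.val.1, 0) := Prod.ext rfl (by simp [h])
  refine exists_apply_eq_of_sub_mem_translations (hxy ▸ hP _ ?_)
  rw [map_sub, mem_XPlus_iff.mp x.2, mem_XPlus_iff.mp y.2, h, sub_self]

lemma exists_apply_eq_of_fst_eq
    (hQ : ∀ δ, parity n δ = 0 → (0, δ) ∈ translations L) {x y : XPlus (2 * m) (2 * n)}
    (h : x.val.1 = y.val.1) : ∃ g ∈ L, g y = x := by
  have hxy : x.val - y.val = (0, x.val.2 - y.val.2) := Prod.ext (by simp [h]) rfl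
  refine exists_apply_eq_of_sub_mem_translations (hxy ▸ hQ _ ?_)
  rw [map_sub, ← mem_XPlus_iff.mp x.2, ← mem_XPlus_iff.mp y.2, h, sub_self]

lemma card_quotient_le_two (hP : ∀ γ, parity m γ = 0 → (γ, 0) ∈ translations L)
    (hQ : ∀ δ, parity n δ = 0 → (0, δ) ∈ translations L) :
    Nat.card (Quotient (orbitSetoid L)) ≤ 2 := by
  refine (card_quotient_le (fun x => parity m x.val.1) fun x y h => ?_).trans
    (Nat.card_zmod 2).le
  have hxy : x.val - y.val = (x.val.1 - y.val.1, 0) + (0, x.val.2 - y.val.2) := by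
    ext <;> simp
  refine exists_apply_eq_of_sub_mem_translations (hxy ▸ add_mem (hP _ ?_) (hQ _ ?_))
  · rw [map_sub, h, sub_self]
  · rw [map_sub, ← mem_XPlus_iff.mp x.2, ← mem_XPlus_iff.mp y.2, h, sub_self]

end Quotients

section FourByFour

/-- On `X⁺(4,4)` the translation by `(2,2)` has the fibres of this map as orbits, and they form
a `4`-cycle: `(0,0), (1,1), (0,2), (1,3)` represent the values `0, 1, 2, 3`. -/
def diagCoord (u : ZMod 4 × ZMod 4) : ZMod 4 := u.1 - u.2 + ((u.1.val % 2 : ℕ) : ZMod 4)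

lemma diagCoord_affine : ∀ (ε₁ ε₂ : ℤˣ) (k l : ZMod 4), (parity 2 k = 0 ↔ ε₁ = ε₂) →
    (parity 2 l = 0 ↔ ε₁ = ε₂) → ∀ u : ZMod 4 × ZMod 4, u.1.val % 2 = u.2.val % 2 →
    diagCoord ((ε₁ : ZMod 4) * u.1 + k, (ε₂ : ZMod 4) * u.2 + l) =
      diagCoord u + diagCoord (k, l) := by
  decide

lemma diagCoord_eq_iff : ∀ u v : ZMod 4 × ZMod 4, u.1.val % 2 = u.2.val % 2 →
    v.1.val % 2 = v.2.val % 2 → diagCoord u = diagCoord v → u = v ∨ u = v + (2, 2) := by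
  decide

lemma isCycleCoord_diagCoord : IsCycleCoord (GammaPlus 4 4) fun x => diagCoord x.val := by
  have hsurj : ∀ j : ZMod 4, ∃ u : ZMod 4 × ZMod 4,
      u.1.val % 2 = u.2.val % 2 ∧ diagCoord u = j := by
    decide
  have hadj : ∀ u v : ZMod 4 × ZMod 4, u.1.val % 2 = u.2.val % 2 → v.1.val % 2 = v.2.val % 2 →
      (v.1 = u.1 + 1 ∨ v.1 = u.1 - 1) ∧ (v.2 = u.2 + 1 ∨ v.2 = u.2 - 1) →
      diagCoord v = diagCoord u + 1 ∨ diagCoord u = diagCoord v + 1 := by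
    decide
  have hstep : ∀ u : ZMod 4 × ZMod 4, u.1.val % 2 = u.2.val % 2 → ∃ v : ZMod 4 × ZMod 4,
      v.1.val % 2 = v.2.val % 2 ∧ u ≠ v ∧ ((v.1 = u.1 + 1 ∨ v.1 = u.1 - 1) ∧
        (v.2 = u.2 + 1 ∨ v.2 = u.2 - 1)) ∧ diagCoord v = diagCoord u + 1 := by
    decide
  refine ⟨fun j => ?_, fun x y hxy => hadj _ _ x.2 y.2 (gammaPlus_adj_iff.mp hxy).2, fun x => ?_⟩
  · obtain ⟨u, hu, hj⟩ := hsurj j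
    exact ⟨⟨u, hu⟩, hj⟩
  · obtain ⟨v, hv, hne, hrel, hc⟩ := hstep _ x.2
    exact ⟨⟨v, hv⟩, gammaPlus_adj_iff.mpr ⟨fun h => hne (congrArg Subtype.val h), hrel⟩, hc⟩

theorem card_le_two_or_isoCycle_four_four {L : Subgroup (Equiv.Perm (XPlus 4 4))}
    (hL : ∀ f ∈ L, IsHPlusMap (m := 2) (n := 2) f)
    (ht : ((2, 2) : ZMod 4 × ZMod 4) ∈ translations L) :
    Nat.card (Quotient (orbitSetoid L)) ≤ 2 ∨ IsoCycle (quotientGraph (GammaPlus 4 4) L) := by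
  obtain ⟨t, htL, hta⟩ := ht
  set c : XPlus 4 4 → ZMod 4 := fun x => diagCoord x.val
  have hshift : ∀ f ∈ L, ∃ δ, ∀ x, c (f x) = c x + δ := by
    intro f hf
    obtain ⟨ε₁, ε₂, k, l, hfa, hk, hl⟩ := hL f hf
    exact ⟨diagCoord (k, l), fun x => by
      simp only [c, hfa x]; exact diagCoord_affine ε₁ ε₂ k l hk hl _ x.2⟩
  have hfibre : ∀ x y, c x = c y → ∃ g ∈ L, g y = x := by
    intro x y hxy
    rcases diagCoord_eq_iff _ _ x.2 y.2 hxy with h | h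
    · exact ⟨1, L.one_mem, Subtype.ext h.symm⟩
    · exact ⟨t, htL, Subtype.ext (by rw [hta y, h]; ext <;> simp)⟩
  by_cases hfix : ∀ f ∈ L, ∀ x, c (f x) = c x
  · refine Or.inr (isoCycle_quotientGraph (by norm_num) isCycleCoord_diagCoord
      fun x y => ⟨?_, hfibre x y⟩)
    rintro ⟨g, hg, rfl⟩
    exact hfix g hg y
  push Not at hfix
  obtain ⟨f, hf, x₀, hx₀⟩ := hfix
  obtain ⟨δ, hδ⟩ := hshift f hf
  have hδ0 : δ ≠ 0 := fun h => hx₀ (by rw [hδ, h, add_zero])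
  obtain ⟨g, hg, hg2⟩ : ∃ g ∈ L, ∀ x, c (g x) = c x + 2 := by
    have hZ4 : ∀ δ : ZMod 4, δ ≠ 0 → δ = 2 ∨ δ + δ = 2 := by decide
    rcases hZ4 δ hδ0 with h | h
    · exact ⟨f, hf, fun x => by rw [hδ, h]⟩
    · exact ⟨f * f, L.mul_mem hf hf, fun x => by
        rw [Equiv.Perm.mul_apply, hδ, hδ, add_assoc, h]⟩
  refine Or.inl ((card_quotient_le (fun x => ((c x).val : ZMod 2)) fun x y hxy => ?_).trans
    (Nat.card_zmod 2).le)
  rcases (by decide : ∀ a b : ZMod 4, (a.val : ZMod 2) = b.val → a = b ∨ a = b + 2) _ _ hxy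
    with h | h
  · exact hfibre x y h
  · obtain ⟨h', hh', hx⟩ := hfibre x (g y) (by rw [hg2, h])
    exact ⟨h' * g, L.mul_mem hh' hg, hx⟩

end FourByFour

section HPlusCommutators

variable {r s : ℕ} {hr : 2 ∣ r} {hr0 : r ≠ 0} {hs : 2 ∣ s} {hs0 : s ≠ 0}
  {L : Subgroup (Equiv.Perm (XPlus r s))} {f : Equiv.Perm (XPlus r s)} {ε₁ ε₂ : ℤˣ}
  {k : ZMod r} {l : ZMod s}

lemma neg_two_mul_mem_translations (hL : NormalIn L (HPlusGroup r s hr hr0 hs hs0))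
    (hf : f ∈ L) (hfa : IsAffine f ε₁ ε₂ k l) : (-(2 * k), -(2 * l)) ∈ translations L := by
  have := commutator_mem_translations hL (Subgroup.subset_closure (by simp))
    (isAffine_tauP hr hr0 hs hs0) hf hfa
  convert this using 2 <;> push_cast <;> ring

lemma mem_translations_of_sigmaMuNuP (hL : NormalIn L (HPlusGroup r s hr hr0 hs hs0))
    (hf : f ∈ L) (hfa : IsAffine f ε₁ ε₂ k l) :
    ((ε₁ : ZMod r) - 1 - 2 * k, 1 - (ε₂ : ZMod s)) ∈ translations L := by
  have := commutator_mem_translations hL (Subgroup.subset_closure (by simp))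
    (isAffine_sigmaMuNuP hr hr0 hs hs0) hf hfa
  convert this using 2 <;> push_cast <;> ring

lemma mem_translations_of_tauP_mul_sigmaMuNuP (hL : NormalIn L (HPlusGroup r s hr hr0 hs hs0))
    (hf : f ∈ L) (hfa : IsAffine f ε₁ ε₂ k l) :
    (1 - (ε₁ : ZMod r), (ε₂ : ZMod s) - 1 - 2 * l) ∈ translations L := by
  have := commutator_mem_translations hL
    (mul_mem (Subgroup.subset_closure (by simp)) (Subgroup.subset_closure (by simp)))
    (isAffine_tauP_mul_sigmaMuNuP hr hr0 hs hs0) hf hfa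
  convert this using 2 <;> push_cast <;> ring

lemma two_mul_fst_mem_translations (hL : NormalIn L (HPlusGroup r s hr hr0 hs hs0))
    {v : ZMod r × ZMod s} (hv : v ∈ translations L) : (2 * v.1, 0) ∈ translations L := by
  obtain ⟨f, hf, hfa⟩ := hv
  simpa using neg_mem (mem_translations_of_sigmaMuNuP hL hf hfa)

lemma two_mul_snd_mem_translations (hL : NormalIn L (HPlusGroup r s hr hr0 hs hs0))
    {v : ZMod r × ZMod s} (hv : v ∈ translations L) : (0, 2 * v.2) ∈ translations L := by
  obtain ⟨f, hf, hfa⟩ := hv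
  simpa using neg_mem (mem_translations_of_tauP_mul_sigmaMuNuP hL hf hfa)

end HPlusCommutators

section Classification

variable {m n : ℕ} {L : Subgroup (Equiv.Perm (XPlus (2 * m) (2 * n)))}

lemma mem_translations_inl_of_parity [Fact m.Prime] {γ : ZMod (2 * m)}
    (h : (γ, 0) ∈ translations L) (hγ : parity m γ = 0) (hγ0 : γ ≠ 0) {γ' : ZMod (2 * m)}
    (hγ' : parity m γ' = 0) : (γ', 0) ∈ translations L :=
  AddSubgroup.mem_comap.mp <|
    mem_of_parity_eq_zero (K := (translations L).comap (AddMonoidHom.inl _ _)) h hγ hγ0 hγ'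

lemma mem_translations_inr_of_parity [Fact n.Prime] {δ : ZMod (2 * n)}
    (h : (0, δ) ∈ translations L) (hδ : parity n δ = 0) (hδ0 : δ ≠ 0) {δ' : ZMod (2 * n)}
    (hδ' : parity n δ' = 0) : (0, δ') ∈ translations L :=
  AddSubgroup.mem_comap.mp <|
    mem_of_parity_eq_zero (K := (translations L).comap (AddMonoidHom.inr _ _)) h hδ hδ0 hδ'

lemma eq_two_of_two_mul_eq_zero [Fact m.Prime] {x : ZMod (2 * m)} (hx : 2 * x = 0) (hx0 : x ≠ 0)
    (hpar : parity m x = 0) : m = 2 ∧ x = m := by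
  obtain rfl := (eq_zero_or_eq_of_two_mul_eq_zero hx).resolve_left hx0
  rw [map_natCast, ZMod.natCast_eq_zero_iff_even, (Fact.out : m.Prime).even_iff] at hpar
  exact ⟨hpar, rfl⟩

variable [Fact m.Prime] [Fact n.Prime] {hre : 2 ∣ 2 * m} {hr0 : 2 * m ≠ 0} {hse : 2 ∣ 2 * n}
  {hs0 : 2 * n ≠ 0}

lemma parity_eq_zero_of_mem_translations
    (hL : NormalIn L (HPlusGroup (2 * m) (2 * n) hre hr0 hse hs0)) {v : ZMod (2 * m) × ZMod (2 * n)}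
    (hv : v ∈ translations L) : parity m v.1 = 0 ∧ parity n v.2 = 0 := by
  obtain ⟨f, hf, hfa⟩ := hv
  obtain ⟨hk, hl⟩ := (isHPlusMap_of_mem (hL.1 hf)).parity_iff hfa
  exact ⟨hk.mpr rfl, hl.mpr rfl⟩

lemma exists_mem_translations_ne_zero
    (hL : NormalIn L (HPlusGroup (2 * m) (2 * n) hre hr0 hse hs0)) (hne : L ≠ ⊥) :
    ∃ v ∈ translations L, v ≠ 0 := by
  obtain ⟨f, hf, hf1⟩ := L.bot_or_exists_ne_one.resolve_left hne
  obtain ⟨ε₁, ε₂, k, l, hfa, -, -⟩ := isHPlusMap_of_mem (hL.1 hf)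
  have h2 := two_ne_zero_of_one_lt (m := m)
  have h2' := two_ne_zero_of_one_lt (m := n)
  rcases Int.units_eq_one_or ε₁ with rfl | rfl <;> rcases Int.units_eq_one_or ε₂ with rfl | rfl
  · refine ⟨(k, l), ⟨f, hf, hfa⟩, fun h => hf1 (hfa.eq (isAffine_one.congr rfl rfl ?_ ?_))⟩
    exacts [(congrArg Prod.fst h).symm, (congrArg Prod.snd h).symm]
  · refine ⟨_, mem_translations_of_sigmaMuNuP hL hf hfa, fun h => h2' ?_⟩
    simpa [one_add_one_eq_two] using congrArg Prod.snd h
  · refine ⟨_, mem_translations_of_tauP_mul_sigmaMuNuP hL hf hfa, fun h => h2 ?_⟩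
    simpa [one_add_one_eq_two] using congrArg Prod.fst h
  · refine ⟨_, mem_translations_of_sigmaMuNuP hL hf hfa, fun h => h2' ?_⟩
    simpa [one_add_one_eq_two] using congrArg Prod.snd h

theorem isoCycle_of_forall_mem_translations_inl
    (hL : NormalIn L (HPlusGroup (2 * m) (2 * n) hre hr0 hse hs0))
    (hP : ∀ γ, parity m γ = 0 → (γ, 0) ∈ translations L)
    (hT : ∀ v ∈ translations L, v.2 = 0) :
    IsoCycle (quotientGraph (GammaPlus (2 * m) (2 * n)) L) := by
  refine isoCycle_quotientGraph_of_shifts isCycleCoord_snd (fun f hf => ?_)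
    fun x y h => exists_apply_eq_of_snd_eq hP h
  obtain ⟨ε₁, ε₂, k, l, hfa, -, hl⟩ := isHPlusMap_of_mem (hL.1 hf)
  obtain rfl : ε₂ = 1 := by
    have := hT _ (mem_translations_of_sigmaMuNuP hL hf hfa)
    exact (units_eq_of_cast_eq (m := n) (by push_cast; exact sub_eq_zero.mp this)).symm
  refine ⟨l, ?_, fun x => by simp [hfa x]⟩
  rcases Int.units_eq_one_or ε₁ with rfl | rfl
  · exact Or.inl (hT (k, l) ⟨f, hf, hfa⟩)
  · refine Or.inr ⟨fun h => absurd (hl.mp h) (by decide), ?_⟩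
    simpa using hT _ (neg_two_mul_mem_translations hL hf hfa)

theorem isoCycle_of_forall_mem_translations_inr
    (hL : NormalIn L (HPlusGroup (2 * m) (2 * n) hre hr0 hse hs0))
    (hQ : ∀ δ, parity n δ = 0 → (0, δ) ∈ translations L)
    (hT : ∀ v ∈ translations L, v.1 = 0) :
    IsoCycle (quotientGraph (GammaPlus (2 * m) (2 * n)) L) := by
  refine isoCycle_quotientGraph_of_shifts isCycleCoord_fst (fun f hf => ?_)
    fun x y h => exists_apply_eq_of_fst_eq hQ h
  obtain ⟨ε₁, ε₂, k, l, hfa, hk, -⟩ := isHPlusMap_of_mem (hL.1 hf)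
  obtain rfl : ε₁ = 1 := by
    have := hT _ (mem_translations_of_tauP_mul_sigmaMuNuP hL hf hfa)
    exact (units_eq_of_cast_eq (m := m) (by push_cast; exact sub_eq_zero.mp this)).symm
  refine ⟨k, ?_, fun x => by simp [hfa x]⟩
  rcases Int.units_eq_one_or ε₂ with rfl | rfl
  · exact Or.inl (hT (k, l) ⟨f, hf, hfa⟩)
  · refine Or.inr ⟨fun h => absurd (hk.mp h) (by decide), ?_⟩
    simpa using hT _ (neg_two_mul_mem_translations hL hf hfa)

/-- With neither all even horizontal nor all even vertical translations, `2v = 0` for every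
translation `v` of `L`, which forces `v = (m, n)` and `m = n = 2`. -/
theorem card_le_two_or_isoCycle_of_not_forall
    (hL : NormalIn L (HPlusGroup (2 * m) (2 * n) hre hr0 hse hs0))
    {v : ZMod (2 * m) × ZMod (2 * n)} (hv : v ∈ translations L) (hv0 : v ≠ 0)
    (hP : ¬ ∀ γ, parity m γ = 0 → (γ, 0) ∈ translations L)
    (hQ : ¬ ∀ δ, parity n δ = 0 → (0, δ) ∈ translations L) :
    Nat.card (Quotient (orbitSetoid L)) ≤ 2 ∨
      IsoCycle (quotientGraph (GammaPlus (2 * m) (2 * n)) L) := by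
  obtain ⟨hv1, hv2⟩ := parity_eq_zero_of_mem_translations hL hv
  have h2α : 2 * v.1 = 0 := by
    by_contra h
    exact hP fun γ hγ => mem_translations_inl_of_parity (two_mul_fst_mem_translations hL hv)
      (by rw [map_mul, hv1, mul_zero]) h hγ
  have h2β : 2 * v.2 = 0 := by
    by_contra h
    exact hQ fun δ hδ => mem_translations_inr_of_parity (two_mul_snd_mem_translations hL hv)
      (by rw [map_mul, hv2, mul_zero]) h hδ
  have hα0 : v.1 ≠ 0 := fun h => hQ fun δ hδ => mem_translations_inr_of_parity
    (by rwa [← h]) hv2 (fun h' => hv0 (Prod.ext h h')) hδ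
  have hβ0 : v.2 ≠ 0 := fun h => hP fun γ hγ => mem_translations_inl_of_parity
    (by rwa [← h]) hv1 (fun h' => hv0 (Prod.ext h' h)) hγ
  obtain ⟨rfl, hα⟩ := eq_two_of_two_mul_eq_zero h2α hα0 hv1
  obtain ⟨rfl, hβ⟩ := eq_two_of_two_mul_eq_zero h2β hβ0 hv2
  obtain rfl : v = (2, 2) := Prod.ext hα hβ
  exact card_le_two_or_isoCycle_four_four (fun f hf => isHPlusMap_of_mem (hL.1 hf)) hv

theorem card_le_two_or_isoCycle (hL : NormalIn L (HPlusGroup (2 * m) (2 * n) hre hr0 hse hs0))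
    (hne : L ≠ ⊥) : Nat.card (Quotient (orbitSetoid L)) ≤ 2 ∨
      IsoCycle (quotientGraph (GammaPlus (2 * m) (2 * n)) L) := by
  have hpar := fun {v} => parity_eq_zero_of_mem_translations hL (v := v)
  obtain ⟨v, hv, hv0⟩ := exists_mem_translations_ne_zero hL hne
  by_cases hP : ∀ γ, parity m γ = 0 → (γ, 0) ∈ translations L <;>
    by_cases hQ : ∀ δ, parity n δ = 0 → (0, δ) ∈ translations L
  · exact Or.inl (card_quotient_le_two hP hQ)
  · refine Or.inr (isoCycle_of_forall_mem_translations_inl hL hP fun w hw => ?_)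
    by_contra hw2
    have hw' : (0, w.2) ∈ translations L := by
      convert sub_mem hw (hP w.1 (hpar hw).1) using 1
      ext <;> simp
    exact hQ fun δ hδ => mem_translations_inr_of_parity hw' (hpar hw).2 hw2 hδ
  · refine Or.inr (isoCycle_of_forall_mem_translations_inr hL hQ fun w hw => ?_)
    by_contra hw1
    have hw' : (w.1, 0) ∈ translations L := by
      convert sub_mem hw (hQ w.2 (hpar hw).2) using 1
      ext <;> simp
    exact hP fun γ hγ => mem_translations_inl_of_parity hw' (hpar hw).1 hw1 hγ
  · exact card_le_two_or_isoCycle_of_not_forall hL hv hv0 hP hQ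

end Classification

section CyclicSubgroups

variable {r s : ℕ} {hr : 2 ∣ r} {hr0 : r ≠ 0} {hs : 2 ∣ s} {hs0 : s ≠ 0}

lemma exists_isAffine_of_mem_closure_muSqP {f : Equiv.Perm (XPlus r s)}
    (hf : f ∈ Subgroup.closure {muSqP r s hr hr0}) : ∃ k, IsAffine f 1 1 k 0 := by
  induction hf using Subgroup.closure_induction with
  | mem g hg => exact ⟨2, (Set.mem_singleton_iff.mp hg) ▸ isAffine_muSqP hr hr0⟩
  | one => exact ⟨0, isAffine_one⟩
  | mul f g _ _ hf hg =>
    obtain ⟨⟨k, hk⟩, ⟨k', hk'⟩⟩ := And.intro hf hg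
    exact ⟨_, (hk.mul hk').congr (mul_one 1) (mul_one 1) rfl (by simp)⟩
  | inv f _ hf =>
    obtain ⟨k, hk⟩ := hf
    exact ⟨_, hk.inv.congr rfl rfl rfl (by simp)⟩

lemma exists_isAffine_of_mem_closure_nuSqP {f : Equiv.Perm (XPlus r s)}
    (hf : f ∈ Subgroup.closure {nuSqP r s hs hs0}) : ∃ l, IsAffine f 1 1 0 l := by
  induction hf using Subgroup.closure_induction with
  | mem g hg => exact ⟨2, (Set.mem_singleton_iff.mp hg) ▸ isAffine_nuSqP hs hs0⟩
  | one => exact ⟨0, isAffine_one⟩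
  | mul f g _ _ hf hg =>
    obtain ⟨⟨l, hl⟩, ⟨l', hl'⟩⟩ := And.intro hf hg
    exact ⟨_, (hl.mul hl').congr (mul_one 1) (mul_one 1) (by simp) rfl⟩
  | inv f _ hf =>
    obtain ⟨l, hl⟩ := hf
    exact ⟨_, hl.inv.congr rfl rfl (by simp) rfl⟩

lemma mul_muSqP_mul_inv_mem_closure {h : Equiv.Perm (XPlus r s)} {ε₁ ε₂ : ℤˣ} {k : ZMod r}
    {l : ZMod s} (hh : IsAffine h ε₁ ε₂ k l) :
    h * muSqP r s hr hr0 * h⁻¹ ∈ Subgroup.closure {muSqP r s hr hr0} := by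
  have hconj := (hh.mul (isAffine_muSqP hr hr0)).mul hh.inv
  have hμ : muSqP r s hr hr0 ∈ Subgroup.closure {muSqP r s hr hr0} :=
    Subgroup.subset_closure rfl
  rcases Int.units_eq_one_or ε₁ with rfl | rfl
  · rw [hconj.eq ((isAffine_muSqP hr hr0).congr (by simp) (by simp [Int.units_mul_self])
      (by simp) (by simp))]
    exact hμ
  · rw [hconj.eq ((isAffine_muSqP hr hr0).inv.congr (by simp) (by simp [Int.units_mul_self])
      (by simp) (by simp))]
    exact inv_mem hμ

end CyclicSubgroups

section CyclicQuotients

variable {m n : ℕ} {hre : 2 ∣ 2 * m} {hr0 : 2 * m ≠ 0} {hse : 2 ∣ 2 * n} {hs0 : 2 * n ≠ 0}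

lemma isoCycle_quotientGraph_closure_muSqP [Fact m.Prime] [Fact n.Prime] :
    IsoCycle (quotientGraph (GammaPlus (2 * m) (2 * n))
      (Subgroup.closure {muSqP (2 * m) (2 * n) hre hr0})) := by
  have hμ : ((2 : ZMod (2 * m)), (0 : ZMod (2 * n))) ∈
      translations (Subgroup.closure {muSqP _ _ hre hr0}) :=
    ⟨_, Subgroup.subset_closure rfl, isAffine_muSqP hre hr0⟩
  have hP : ∀ γ, parity m γ = 0 → (γ, 0) ∈ translations (Subgroup.closure {muSqP _ _ hre hr0}) :=
    fun γ hγ => mem_translations_inl_of_parity hμ (by rw [map_ofNat]; rfl) two_ne_zero_of_one_lt hγ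
  refine isoCycle_quotientGraph_of_shifts isCycleCoord_snd (fun f hf => ?_)
    fun x y h => exists_apply_eq_of_snd_eq hP h
  obtain ⟨k, hk⟩ := exists_isAffine_of_mem_closure_muSqP hf
  exact ⟨0, Or.inl rfl, fun x => by simp [hk x]⟩

lemma isoCycle_quotientGraph_closure_nuSqP [Fact m.Prime] [Fact n.Prime] :
    IsoCycle (quotientGraph (GammaPlus (2 * m) (2 * n))
      (Subgroup.closure {nuSqP (2 * m) (2 * n) hse hs0})) := by
  have hν : ((0 : ZMod (2 * m)), (2 : ZMod (2 * n))) ∈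
      translations (Subgroup.closure {nuSqP _ _ hse hs0}) :=
    ⟨_, Subgroup.subset_closure rfl, isAffine_nuSqP hse hs0⟩
  have hQ : ∀ δ, parity n δ = 0 → (0, δ) ∈ translations (Subgroup.closure {nuSqP _ _ hse hs0}) :=
    fun δ hδ => mem_translations_inr_of_parity hν (by rw [map_ofNat]; rfl) two_ne_zero_of_one_lt hδ
  refine isoCycle_quotientGraph_of_shifts isCycleCoord_fst (fun f hf => ?_)
    fun x y h => exists_apply_eq_of_fst_eq hQ h
  obtain ⟨l, hl⟩ := exists_isAffine_of_mem_closure_nuSqP hf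
  exact ⟨0, Or.inl rfl, fun x => by simp [hl x]⟩

lemma normalIn_closure_muSqP :
    NormalIn (Subgroup.closure {muSqP (2 * m) (2 * n) hre hr0})
      (HPlusGroup (2 * m) (2 * n) hre hr0 hse hs0) := by
  refine ⟨(Subgroup.closure_le _).mpr (Set.singleton_subset_iff.mpr
    (Subgroup.subset_closure (by simp))), fun h hh x hx => ?_⟩
  obtain ⟨z, rfl⟩ := Subgroup.mem_closure_singleton.mp hx
  obtain ⟨ε₁, ε₂, k, l, hha, -, -⟩ := isHPlusMap_of_mem hh
  rw [← conj_zpow]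
  exact zpow_mem (mul_muSqP_mul_inv_mem_closure hha) z

lemma closure_muSqP_ne_bot [Fact (1 < m)] :
    Subgroup.closure {muSqP (2 * m) (2 * n) hre hr0} ≠ ⊥ := by
  intro h
  have h1 : muSqP (2 * m) (2 * n) hre hr0 = 1 :=
    (Subgroup.eq_bot_iff_forall _).mp h _ (Subgroup.subset_closure rfl)
  have h2 := congrArg (fun f : Equiv.Perm (XPlus _ _) => (f ⟨0, by simp [XPlus]⟩).val.1) h1
  simp only [isAffine_muSqP hre hr0 _, Equiv.Perm.one_apply] at h2
  exact two_ne_zero_of_one_lt (m := m) (by simpa using h2)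

end CyclicQuotients

/-- for `(r,s)` of the form `(4,4)`, `(4,2p)`, `(2p,4)` or `(2p,2q)` with `p`,
`q` odd primes, every normal quotient of `(Γ⁺(r,s), H⁺(r,s))` by a nontrivial normal
subgroup is degenerate, the quotients by `⟨μ²⟩` and `⟨ν²⟩` are cycles, and the pair is basic
of cycle type. -/
theorem stmt8 (r s : ℕ) (hre : 2 ∣ r) (hr0 : r ≠ 0) (hse : 2 ∣ s) (hs0 : s ≠ 0)
    (h : (r = 4 ∧ s = 4) ∨ (∃ p : ℕ, p.Prime ∧ Odd p ∧ r = 4 ∧ s = 2 * p) ∨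
      (∃ p : ℕ, p.Prime ∧ Odd p ∧ r = 2 * p ∧ s = 4) ∨
      (∃ p q : ℕ, p.Prime ∧ Odd p ∧ q.Prime ∧ Odd q ∧ r = 2 * p ∧ s = 2 * q)) :
    (∀ L : Subgroup (Equiv.Perm (XPlus r s)),
      NormalIn L (HPlusGroup r s hre hr0 hse hs0) → L ≠ ⊥ →
      Nat.card (Quotient (orbitSetoid L)) ≤ 2 ∨ IsoCycle (quotientGraph (GammaPlus r s) L)) ∧
    IsoCycle (quotientGraph (GammaPlus r s) (Subgroup.closure {muSqP r s hre hr0})) ∧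
    IsoCycle (quotientGraph (GammaPlus r s) (Subgroup.closure {nuSqP r s hse hs0})) ∧
    BasicOfCycleType (GammaPlus r s) (HPlusGroup r s hre hr0 hse hs0) := by
  obtain ⟨m, n, hm, hn, rfl, rfl⟩ : ∃ m n : ℕ, m.Prime ∧ n.Prime ∧ r = 2 * m ∧ s = 2 * n := by
    rcases h with ⟨rfl, rfl⟩ | ⟨p, hp, -, rfl, rfl⟩ | ⟨p, hp, -, rfl, rfl⟩ |
      ⟨p, q, hp, -, hq, -, rfl, rfl⟩
    exacts [⟨2, 2, Nat.prime_two, Nat.prime_two, rfl, rfl⟩, ⟨2, p, Nat.prime_two, hp, rfl, rfl⟩,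
      ⟨p, 2, hp, Nat.prime_two, rfl, rfl⟩, ⟨p, q, hp, hq, rfl, rfl⟩]
  have : Fact m.Prime := ⟨hm⟩
  have : Fact n.Prime := ⟨hn⟩
  have hbasic : IsBasic (GammaPlus (2 * m) (2 * n)) (HPlusGroup (2 * m) (2 * n) hre hr0 hse hs0) :=
    fun L hL hne => card_le_two_or_isoCycle hL hne
  exact ⟨hbasic, isoCycle_quotientGraph_closure_muSqP, isoCycle_quotientGraph_closure_nuSqP,
    hbasic, _, normalIn_closure_muSqP, closure_muSqP_ne_bot, isoCycle_quotientGraph_closure_muSqP⟩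

end OG4
end

section
/- Let r, s ≥ 3 be integers, let H be a group isomorphic to the dihedral group D_r of order 2r, and let K be a group isomorphic either to the cyclic group C_s of order s or to the dihedral group D_s of order 2s. Set G = H × K and let M be a minimal normal subgroup of G. Then one of the following holds: (a) M ≤ H × {1}, the projection of M to H is a minimal normal subgroup of H, and M is cyclic of order p for some prime p dividing r; (b) M ≤ {1} × K, the projection of M to K is a minimal normal subgroup of K, and M is cyclic of order p for some prime p dividing s; (c) r and s are both even, M is contained in the center of G, and M is cyclic of order 2. -/
open SimpleGraph

namespace OG4

variable {V : Type*} {W : Type*}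

/-!
Each of `M ⊓ (H × 1)` and `M ⊓ (1 × K)` is normal in `H × K`, so by minimality it is trivial or
all of `M`. If `M` lies in a factor, the projection to that factor is injective on `M` and maps
it onto a minimal normal subgroup. In `D_n` (`n ≥ 3`) a minimal normal subgroup lies in the
rotation subgroup, all of whose subgroups are normal, and in `C_n` every subgroup is normal; by
Cauchy's theorem a minimal normal subgroup is then generated by an element of prime order `p`, and
`p ∣ n`. If `M` meets both factors trivially, it commutes with both, so it is central. Central
elements of `D_r` square to `1`, so for `1 ≠ x ∈ M` the square `x²` lies in `M ⊓ (1 × K) = 1`,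
and `M = ⟨x⟩` has order `2`. Both projections are injective on `M` with minimal normal images,
so `2` divides `r` and `s`.
-/

open Subgroup

section

variable {G G' : Type*} [Group G] [Group G'] {M : Subgroup G}

theorem _root_.Subgroup.normal_of_le_center {N : Subgroup G} (h : N ≤ center G) : N.Normal :=
  ⟨fun n hn g => by rwa [mem_center_iff.mp (h hn) g, mul_inv_cancel_right]⟩

theorem _root_.Subgroup.card_map_of_disjoint_ker {f : G →* G'} (h : Disjoint M f.ker) :
    Nat.card (M.map f) = Nat.card M := by
  refine (Nat.card_eq_of_bijective _ ⟨?_, f.subgroupMap_surjective M⟩).symm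
  rw [← MonoidHom.ker_eq_bot_iff, eq_bot_iff]
  intro x hx
  exact mem_bot.mpr (Subtype.ext (disjoint_def.mp h x.2 (congrArg Subtype.val hx)))

theorem _root_.Subgroup.Normal.le_center_of_disjoint_prod {M : Subgroup (G × G')}
    (hM : M.Normal) (hG : Disjoint M ((⊤ : Subgroup G).prod ⊥))
    (hG' : Disjoint M ((⊥ : Subgroup G).prod ⊤)) : M ≤ center (G × G') := by
  intro x hx
  refine mem_center_iff.mpr fun g => ?_
  have h1 := commute_of_normal_of_disjoint _ _ hM inferInstance hG x (g.1, 1) hx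
    (mem_prod.mpr ⟨mem_top _, one_mem _⟩)
  have h2 := commute_of_normal_of_disjoint _ _ hM inferInstance hG' x (1, g.2) hx
    (mem_prod.mpr ⟨one_mem _, mem_top _⟩)
  simpa using (h1.mul_right h2).symm.eq

theorem IsMinimalNormal.disjoint_or_le (hM : IsMinimalNormal M) (N : Subgroup G) [N.Normal] :
    Disjoint M N ∨ M ≤ N :=
  have := hM.1
  (hM.2.2 (M ⊓ N) inferInstance inf_le_left).imp disjoint_iff.mpr inf_eq_left.mp

theorem IsMinimalNormal.zpowers_eq (hM : IsMinimalNormal M) {x : G} (hxM : x ∈ M) (hx : x ≠ 1)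
    [(zpowers x).Normal] : zpowers x = M :=
  (hM.2.2 _ inferInstance (zpowers_le.mpr hxM)).resolve_left fun h =>
    hx (by simpa [h] using mem_zpowers x)

theorem IsMinimalNormal.prime_card [Finite G] (hM : IsMinimalNormal M)
    (h : ∀ x ∈ M, (zpowers x).Normal) : (Nat.card M).Prime := by
  have hp : (Nat.card M).minFac.Prime :=
    Nat.minFac_prime (by rw [Ne, card_eq_one]; exact hM.2.1)
  have : Fact (Nat.card M).minFac.Prime := ⟨hp⟩
  obtain ⟨y, hy⟩ := exists_prime_orderOf_dvd_card' (G := M) _ (Nat.minFac_dvd _)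
  have hy1 : (y : G) ≠ 1 := by
    rw [Ne, OneMemClass.coe_eq_one, ← orderOf_eq_one_iff, hy]
    exact hp.ne_one
  have := h y y.2
  rwa [← hM.zpowers_eq y.2 hy1, Nat.card_zpowers, orderOf_coe, hy]

theorem IsMinimalNormal.map {f : G →* G'} (hf : Function.Surjective f)
    (hM : IsMinimalNormal M) (hMf : ¬ M ≤ f.ker) : IsMinimalNormal (M.map f) := by
  refine ⟨hM.1.map f hf, fun h => hMf ((M.map_eq_bot_iff).mp h), fun N hN hNM => ?_⟩
  have : (M ⊓ N.comap f).Normal := @normal_inf_normal _ _ _ _ hM.1 (hN.comap f)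
  rcases hM.2.2 _ this inf_le_left with h | h
  · refine Or.inl (eq_bot_iff.mpr fun n hn => ?_)
    obtain ⟨m, hm, rfl⟩ := hNM hn
    rw [mem_bot.mp (h ▸ mem_inf.mpr ⟨hm, hn⟩ : m ∈ (⊥ : Subgroup G)), map_one]
    exact one_mem _
  · exact Or.inr (le_antisymm hNM (map_le_iff_le_comap.mpr (inf_eq_left.mp h)))

theorem IsMinimalNormal.map_mulEquiv (hM : IsMinimalNormal M) (e : G ≃* G') :
    IsMinimalNormal (M.map e.toMonoidHom) :=
  hM.map e.surjective fun hle =>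
    hM.2.1 (le_bot_iff.mp (hle.trans ((MonoidHom.ker_eq_bot_iff _).mpr e.injective).le))

theorem IsMinimalNormal.prime_card_dvd_of_mulEquiv (hM : IsMinimalNormal M) (e : G ≃* G') {n : ℕ}
    (hG' : ∀ P : Subgroup G', IsMinimalNormal P → (Nat.card P).Prime ∧ Nat.card P ∣ n) :
    (Nat.card M).Prime ∧ Nat.card M ∣ n :=
  card_map_of_injective (f := e.toMonoidHom) e.injective ▸ hG' _ (hM.map_mulEquiv e)

theorem IsMinimalNormal.map_and_prime_card_of_disjoint_ker {f : G →* G'}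
    (hf : Function.Surjective f) (hM : IsMinimalNormal M) (hMf : Disjoint M f.ker) {n : ℕ}
    (hG' : ∀ P : Subgroup G', IsMinimalNormal P → (Nat.card P).Prime ∧ Nat.card P ∣ n) :
    IsMinimalNormal (M.map f) ∧ IsCyclic M ∧ ∃ p : ℕ, p.Prime ∧ p ∣ n ∧ Nat.card M = p := by
  have hmin := hM.map hf fun hle => hM.2.1 (hMf.eq_bot_of_le hle)
  obtain ⟨hp, hpn⟩ := card_map_of_disjoint_ker hMf ▸ hG' _ hmin
  have : Fact (Nat.card M).Prime := ⟨hp⟩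
  exact ⟨hmin, isCyclic_of_prime_card rfl, _, hp, hpn, rfl⟩

end

section

open DihedralGroup

variable {n : ℕ}

theorem _root_.DihedralGroup.r_mem_zpowers_r_one (i : ZMod n) :
    r i ∈ zpowers (r 1 : DihedralGroup n) :=
  mem_zpowers_iff.mpr ⟨(i.cast : ℤ), by rw [r_one_zpow, ZMod.intCast_zmod_cast]⟩

instance _root_.DihedralGroup.zpowers_r_normal (i : ZMod n) : (zpowers (r i)).Normal := by
  refine ⟨fun x hx g => ?_⟩
  obtain ⟨k, rfl⟩ := mem_zpowers_iff.mp hx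
  rcases g with j | j
  · rwa [r_zpow, inv_r, r_mul_r, r_mul_r, add_neg_cancel_comm, ← r_zpow]
  · rw [r_zpow, inv_sr, sr_mul_r, sr_mul_sr, sub_add_cancel_left, ← inv_r, ← r_zpow]
    exact inv_mem hx

theorem _root_.DihedralGroup.sq_eq_one_of_mem_center {z : DihedralGroup n}
    (hz : z ∈ center (DihedralGroup n)) : z ^ 2 = 1 := by
  rcases z with i | i
  · have h : sr 0 * r i = r i * sr 0 := mem_center_iff.mp hz (sr 0)
    rw [sr_mul_r, r_mul_sr, sr.injEq, zero_add, zero_sub, eq_neg_iff_add_eq_zero] at h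
    rw [sq, r_mul_r, h, r_zero]
  · rw [sq, sr_mul_self]

theorem IsMinimalNormal.le_zpowers_r_one {P : Subgroup (DihedralGroup n)}
    (hP : IsMinimalNormal P) (hn : 3 ≤ n) : P ≤ zpowers (r 1) := by
  refine (hP.disjoint_or_le _).resolve_left fun hdis => ?_
  obtain ⟨x, hxP, hx1⟩ := P.bot_or_exists_ne_one.resolve_left hP.2.1
  rcases x with i | i
  · exact hx1 (disjoint_def.mp hdis hxP (r_mem_zpowers_r_one i))
  · -- a reflection times its conjugate by `r 1` is the rotation `r (-2)`, nontrivial as `n ≥ 3`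
    have hconj : sr i * (r 1 * sr i * (r 1)⁻¹) ∈ P := mul_mem hxP (hP.1.conj_mem _ hxP _)
    rw [inv_r, r_mul_sr, sr_mul_r, sr_mul_sr] at hconj
    have h2 := disjoint_def.mp hdis hconj (r_mem_zpowers_r_one _)
    rw [one_def, r.injEq, show i - 1 + -1 - i = -((2 : ℕ) : ZMod n) by push_cast; ring,
      neg_eq_zero, ZMod.natCast_eq_zero_iff] at h2
    exact absurd (Nat.le_of_dvd two_pos h2) (by omega)

theorem IsMinimalNormal.prime_card_dvd_of_dihedral {P : Subgroup (DihedralGroup n)}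
    (hP : IsMinimalNormal P) (hn : 3 ≤ n) : (Nat.card P).Prime ∧ Nat.card P ∣ n := by
  have : NeZero n := ⟨by omega⟩
  have hle := hP.le_zpowers_r_one hn
  refine ⟨hP.prime_card fun x hx => ?_, ?_⟩
  · obtain ⟨k, rfl⟩ := mem_zpowers_iff.mp (hle hx)
    rw [r_one_zpow]
    infer_instance
  · simpa only [Nat.card_zpowers, orderOf_r_one] using card_dvd_of_le hle

theorem IsMinimalNormal.prime_card_dvd_of_zmod [NeZero n]
    {P : Subgroup (Multiplicative (ZMod n))} (hP : IsMinimalNormal P) :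
    (Nat.card P).Prime ∧ Nat.card P ∣ n := by
  refine ⟨hP.prime_card fun _ _ => inferInstance, ?_⟩
  simpa only [Nat.card_congr (Multiplicative.toAdd : Multiplicative (ZMod n) ≃ _), Nat.card_zmod]
    using card_subgroup_dvd_card P

end

theorem IsMinimalNormal.card_eq_two_of_disjoint_prod {A B : Type*} [Group A] [Group B]
    {M : Subgroup (A × B)} (hM : IsMinimalNormal M) (hsq : ∀ a ∈ center A, a ^ 2 = 1)
    (hA : Disjoint M ((⊤ : Subgroup A).prod ⊥)) (hB : Disjoint M ((⊥ : Subgroup A).prod ⊤)) :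
    Nat.card M = 2 := by
  have hZ := hM.1.le_center_of_disjoint_prod hA hB
  obtain ⟨x, hxM, hx1⟩ := M.bot_or_exists_ne_one.resolve_left hM.2.1
  have hx : x.1 ∈ center A := by
    have := hZ hxM
    rw [Subgroup.center_prod, mem_prod] at this
    exact this.1
  have hx2 : x ^ 2 = 1 := by
    refine disjoint_def.mp hB (pow_mem hxM 2) (mem_prod.mpr ⟨?_, mem_top _⟩)
    rw [Prod.pow_fst, hsq _ hx]
    exact one_mem _
  have : (zpowers x).Normal := normal_of_le_center (zpowers_le.mpr (hZ hxM))
  rw [← hM.zpowers_eq hxM hx1, Nat.card_zpowers]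
  exact orderOf_eq_prime hx2 hx1

/-- minimal normal subgroups of `D_r × C_s` and `D_r × D_s`. -/
theorem stmt11 (r s : ℕ) (hr : 3 ≤ r) (hs : 3 ≤ s) (H K : Type*) [Group H] [Group K]
    (hH : Nonempty (H ≃* DihedralGroup r))
    (hK : Nonempty (K ≃* Multiplicative (ZMod s)) ∨ Nonempty (K ≃* DihedralGroup s))
    (M : Subgroup (H × K)) (hM : IsMinimalNormal M) :
    (M ≤ (⊤ : Subgroup H).prod (⊥ : Subgroup K) ∧
      IsMinimalNormal (M.map (MonoidHom.fst H K)) ∧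
      IsCyclic M ∧ ∃ p : ℕ, p.Prime ∧ p ∣ r ∧ Nat.card M = p) ∨
    (M ≤ (⊥ : Subgroup H).prod (⊤ : Subgroup K) ∧
      IsMinimalNormal (M.map (MonoidHom.snd H K)) ∧
      IsCyclic M ∧ ∃ p : ℕ, p.Prime ∧ p ∣ s ∧ Nat.card M = p) ∨
    (2 ∣ r ∧ 2 ∣ s ∧ M ≤ Subgroup.center (H × K) ∧ IsCyclic M ∧ Nat.card M = 2) := by
  obtain ⟨eH⟩ := hH
  have hHmin (P : Subgroup H) (hP : IsMinimalNormal P) : (Nat.card P).Prime ∧ Nat.card P ∣ r :=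
    hP.prime_card_dvd_of_mulEquiv eH fun _ hQ => hQ.prime_card_dvd_of_dihedral hr
  have hKmin (P : Subgroup K) (hP : IsMinimalNormal P) : (Nat.card P).Prime ∧ Nat.card P ∣ s := by
    have : NeZero s := ⟨by omega⟩
    rcases hK with ⟨⟨eK⟩⟩ | ⟨⟨eK⟩⟩
    exacts [hP.prime_card_dvd_of_mulEquiv eK fun _ hQ => hQ.prime_card_dvd_of_zmod,
      hP.prime_card_dvd_of_mulEquiv eK fun _ hQ => hQ.prime_card_dvd_of_dihedral hs]
  have hfst := hM.map_and_prime_card_of_disjoint_ker (f := MonoidHom.fst H K) Prod.fst_surjective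
  have hsnd := hM.map_and_prime_card_of_disjoint_ker (f := MonoidHom.snd H K) Prod.snd_surjective
  rw [MonoidHom.ker_fst] at hfst
  rw [MonoidHom.ker_snd] at hsnd
  rcases hM.disjoint_or_le ((⊤ : Subgroup H).prod ⊥) with hA | hMH
  · rcases hM.disjoint_or_le ((⊥ : Subgroup H).prod ⊤) with hB | hMK
    · have hsq (a : H) (ha : a ∈ center H) : a ^ 2 = 1 := eH.injective <| by
        simpa using DihedralGroup.sq_eq_one_of_mem_center (MulEquivClass.apply_mem_center eH ha)
      have h2 := hM.card_eq_two_of_disjoint_prod hsq hA hB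
      obtain ⟨-, -, p, -, hpr, hp⟩ := hfst hB hHmin
      obtain ⟨-, -, q, -, hqs, hq⟩ := hsnd hA hKmin
      exact Or.inr (Or.inr ⟨h2 ▸ hp ▸ hpr, h2 ▸ hq ▸ hqs,
        hM.1.le_center_of_disjoint_prod hA hB, isCyclic_of_prime_card h2, h2⟩)
    · exact Or.inr (Or.inl ⟨hMK, hsnd hA hKmin⟩)
  · have hB : Disjoint M ((⊥ : Subgroup H).prod ⊤) := disjoint_def.mpr fun hx hx' =>
      Prod.ext (mem_prod.mp hx').1 (mem_prod.mp (hMH hx)).2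
    exact Or.inl ⟨hMH, hfst hB hHmin⟩

end OG4
end
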